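/- arXiv:math/9912253 — 5 statements merged into one kernel-verified Lean document; each statement's English description precedes it below -/
import Mathlib

section
/- Let {x_n} be an integer sequence satisfying x_{n+2} = a₁x_{n+1} + a₀x_n with a₀, a₁ ∈ ℤ, a₀ ≠ 0, that does not satisfy any first order linear recurrence, and suppose the quotient α/α̃ of the two roots of the characteristic polynomial T² − a₁T − a₀ is a root of unity. Then the set of primes dividing some term of the sequence is either finite or cofinite in the set of all primes. -/
private def lucasS (a₀ a₁ : ℤ) : ℕ → ℤ
  | 0 => 2
  | 1 => a₁
  | n+2 => a₁ * lucasS a₀ a₁ (n+1) + a₀ * lucasS a₀ a₁ n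

private lemma two_step {Q : ℕ → Prop} (h0 : Q 0) (h1 : Q 1)
    (hstep : ∀ n, Q n → Q (n+1) → Q (n+2)) : ∀ n, Q n := by
  have H : ∀ n, Q n ∧ Q (n+1) := by
    intro n
    induction n with
    | zero => exact ⟨h0, h1⟩
    | succ m ih => exact ⟨ih.2, hstep m ih.1 ih.2⟩
  exact fun n => (H n).1

/-- Let `{x_n}` be an integer sequence satisfying
`x_{n+2} = a₁x_{n+1} + a₀x_n` with `a₀ ≠ 0`, not satisfying any first order linear
recurrence, and suppose the quotient `α/α̃` of the two roots of the characteristic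
polynomial `T² - a₁T - a₀` is a root of unity. Then the set of primes dividing some
term of the sequence is either finite or cofinite in the set of all primes. -/
theorem degenerate_prime_divisors_finite_or_cofinite
    (x : ℕ → ℤ) (a₀ a₁ : ℤ) (ha₀ : a₀ ≠ 0)
    (hrec : ∀ n, x (n + 2) = a₁ * x (n + 1) + a₀ * x n)
    (hord : ¬ ∃ c : ℚ, ∀ n, (x (n + 1) : ℚ) = c * x n)
    (α α' : ℂ) (hsum : α + α' = (a₁ : ℂ)) (hprod : α * α' = -(a₀ : ℂ))
    (hroot : ∃ k : ℕ, 0 < k ∧ (α / α') ^ k = 1) :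
    {p : ℕ | p.Prime ∧ ∃ n, (p : ℤ) ∣ x n}.Finite ∨
      {p : ℕ | p.Prime ∧ ¬ ∃ n, (p : ℤ) ∣ x n}.Finite := by
  obtain ⟨k, hk, hζ⟩ := hroot
  have ha₀C : (a₀ : ℂ) ≠ 0 := Int.cast_ne_zero.mpr ha₀
  have hαα' : α * α' ≠ 0 := by rw [hprod]; exact neg_ne_zero.mpr ha₀C
  have hα : α ≠ 0 := left_ne_zero_of_mul hαα'
  have hα' : α' ≠ 0 := right_ne_zero_of_mul hαα'
  have hαk : α ^ k = α' ^ k := by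
    rw [div_pow, div_eq_one_iff_eq (pow_ne_zero k hα')] at hζ
    exact hζ
  have ha₀eq : (a₀ : ℂ) = -(α * α') := by linear_combination hprod
  -- the sequence of traces
  have hs : ∀ n, ((lucasS a₀ a₁ n : ℤ) : ℂ) = α ^ n + α' ^ n := by
    refine two_step ?_ ?_ ?_
    · simp only [lucasS, pow_zero]; norm_num
    · simp only [lucasS, pow_one]; exact hsum.symm
    · intro n h1 h2
      show ((a₁ * lucasS a₀ a₁ (n+1) + a₀ * lucasS a₀ a₁ n : ℤ) : ℂ) = _
      push_cast
      rw [h1, h2, ← hsum, ha₀eq]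
      ring
  have hsk2 : ((lucasS a₀ a₁ k : ℤ) : ℂ) = 2 * α ^ k := by
    rw [hs k, hαk]; ring
  have hsq : (lucasS a₀ a₁ k) ^ 2 = 4 * (-a₀) ^ k := by
    have ha : (-(a₀:ℂ)) ^ k = α ^ k * α ^ k := by
      rw [show -(a₀:ℂ) = α * α' from by linear_combination -hprod, mul_pow, ← hαk]
    have h : ((lucasS a₀ a₁ k : ℤ) ^ 2 : ℂ) = ((4 * (-a₀) ^ k : ℤ) : ℂ) := by
      push_cast
      rw [hsk2, ha]
      ring
    exact_mod_cast h
  have h2dvd : (2 : ℤ) ∣ lucasS a₀ a₁ k :=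
    Int.prime_two.dvd_of_dvd_pow (n := 2) ⟨2 * (-a₀) ^ k, by rw [hsq]; ring⟩
  obtain ⟨b, hb⟩ := h2dvd
  have hbk : (b : ℂ) = α ^ k := by
    have h : 2 * (b : ℂ) = 2 * α ^ k := by
      rw [← hsk2, hb]; push_cast; ring
    exact mul_left_cancel₀ two_ne_zero h
  have hbk' : (b : ℂ) = α' ^ k := hbk.trans hαk
  have hbne : b ≠ 0 := by
    intro h
    exact pow_ne_zero k hα (by rw [← hbk, h, Int.cast_zero])
  -- the key second order relation with repeated root b for the subsequence with step k
  have Key : ∀ n, x (n + 2*k) = 2*b * x (n+k) - b^2 * x n := by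
    by_cases hd : α = α'
    · subst hd
      set A := (x 0 : ℂ) with hA
      set B := (x 1 : ℂ)/α - x 0 with hB
      have F : ∀ n, ((x n : ℤ) : ℂ) = (A + B * n) * α ^ n := by
        refine two_step ?_ ?_ ?_
        · simp [hA]
        · rw [hB, hA]; field_simp; ring
        · intro n h1 h2
          have hxC : ((x (n+2) : ℤ) : ℂ) = a₁ * x (n+1) + a₀ * x n := by
            rw [hrec n]; push_cast; ring
          rw [hxC, h1, h2, ← hsum, ha₀eq]
          push_cast
          ring
      have KC : ∀ n, ((x (n + 2*k) : ℤ) : ℂ) = 2*(b:ℂ) * x (n+k) - (b:ℂ)^2 * x n := by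
        intro n
        rw [F (n + 2*k), F (n+k), F n,
          show α ^ (n + 2*k) = α ^ n * (b:ℂ)^2 from by rw [hbk]; ring,
          show α ^ (n + k) = α ^ n * (b:ℂ) from by rw [hbk]; ring]
        push_cast
        ring
      intro n
      exact_mod_cast KC n
    · have hne : α' - α ≠ 0 := sub_ne_zero.mpr (Ne.symm hd)
      set B := ((x 1 : ℂ) - x 0 * α)/(α' - α) with hB
      set A := (x 0 : ℂ) - B with hA
      have F : ∀ n, ((x n : ℤ) : ℂ) = A * α ^ n + B * α' ^ n := by
        refine two_step ?_ ?_ ?_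
        · rw [hA]; simp
        · rw [hA, hB]; field_simp; ring
        · intro n h1 h2
          have hxC : ((x (n+2) : ℤ) : ℂ) = a₁ * x (n+1) + a₀ * x n := by
            rw [hrec n]; push_cast; ring
          rw [hxC, h1, h2, ← hsum, ha₀eq]
          ring
      have HkZ : ∀ n, x (n + k) = b * x n := by
        intro n
        have h : ((x (n+k) : ℤ) : ℂ) = (b : ℂ) * ((x n : ℤ) : ℂ) := by
          rw [F (n+k), F n,
            show α ^ (n + k) = α ^ n * (b:ℂ) from by rw [hbk]; ring,
            show α' ^ (n + k) = α' ^ n * (b:ℂ) from by rw [hbk']; ring]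
          ring
        exact_mod_cast h
      intro n
      have h1 := HkZ (n+k)
      rw [show n + k + k = n + 2*k from by ring] at h1
      rw [h1, HkZ n]
      ring
  -- define c and derive the closed formula
  set c : ℕ → ℤ := fun n => x (n+k) - b * x n with hcdef
  have hxk : ∀ n, x (n+k) = b * x n + c n := by
    intro n; simp only [hcdef]; ring
  have hck : ∀ n, c (n+k) = b * c n := by
    intro n
    simp only [hcdef]
    rw [show n + k + k = n + 2*k from by ring, Key n]
    ring
  have hF : ∀ m n, x (n + k*(m+1)) = b^m * (b * x n + ((m:ℤ)+1) * c n) := by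
    intro m
    induction m with
    | zero =>
      intro n
      rw [show n + k*(0+1) = n + k from by ring, hxk n]
      push_cast
      ring
    | succ m ih =>
      intro n
      rw [show n + k*(m+1+1) = (n+k) + k*(m+1) from by ring, ih (n+k), hck n, hxk n]
      push_cast
      ring
  by_cases hc0 : ∀ n, c n = 0
  · have hbx : ∀ n, x (n+k) = b * x n := by
      intro n
      have h := hxk n
      rw [hc0 n] at h
      linarith
    have hpow : ∀ q r, x (r + k*q) = b^q * x r := by
      intro q
      induction q with
      | zero => intro r; simp
      | succ q ih =>
        intro r
        rw [show r + k*(q+1) = (r + k*q) + k from by ring, hbx, ih]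
        ring
    by_cases hz : ∃ m, x m = 0
    · obtain ⟨m, hm⟩ := hz
      right
      have he : {p : ℕ | p.Prime ∧ ¬ ∃ n, (p : ℤ) ∣ x n} = ∅ := by
        ext p
        simp only [Set.mem_setOf_eq, Set.mem_empty_iff_false, iff_false, not_and]
        intro _ hnd
        exact hnd ⟨m, by simp [hm]⟩
      rw [he]
      exact Set.finite_empty
    · push_neg at hz
      left
      set N : ℤ := b * ∏ r ∈ Finset.range k, x r with hN
      have hN0 : N ≠ 0 := mul_ne_zero hbne (Finset.prod_ne_zero_iff.mpr fun r _ => hz r)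
      apply Set.Finite.subset (N.natAbs.divisors : Finset ℕ).finite_toSet
      rintro p ⟨hp, n, hpn⟩
      have hpZ : Prime (p : ℤ) := Nat.prime_iff_prime_int.mp hp
      rw [← Nat.mod_add_div n k, hpow] at hpn
      have hdvdN : (p : ℤ) ∣ N := by
        rcases hpZ.dvd_mul.mp hpn with h | h
        · exact dvd_mul_of_dvd_left (hpZ.dvd_of_dvd_pow h) _
        · exact dvd_mul_of_dvd_right
            (h.trans (Finset.dvd_prod_of_mem x (Finset.mem_range.mpr (Nat.mod_lt n hk)))) _
      simp only [Finset.mem_coe, Nat.mem_divisors]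
      refine ⟨?_, Int.natAbs_ne_zero.mpr hN0⟩
      have := Int.natAbs_dvd_natAbs.mpr hdvdN
      simpa using this
  · push_neg at hc0
    obtain ⟨n₀, hc₀⟩ := hc0
    right
    set M : ℤ := b * c n₀ with hM
    have hM0 : M ≠ 0 := mul_ne_zero hbne hc₀
    apply Set.Finite.subset (M.natAbs.divisors : Finset ℕ).finite_toSet
    rintro p ⟨hp, hnd⟩
    have hpZ : Prime (p : ℤ) := Nat.prime_iff_prime_int.mp hp
    have hdvd : (p : ℤ) ∣ M := by
      by_contra hnM
      have hpb : ¬ (p:ℤ) ∣ b := fun h => hnM (dvd_mul_of_dvd_left h _)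
      have hpc : ¬ (p:ℤ) ∣ c n₀ := fun h => hnM (dvd_mul_of_dvd_right h _)
      haveI : Fact p.Prime := ⟨hp⟩
      haveI : NeZero p := ⟨hp.pos.ne'⟩
      have hC : ((c n₀ : ℤ) : ZMod p) ≠ 0 := by
        rw [Ne, ZMod.intCast_zmod_eq_zero_iff_dvd]
        exact hpc
      obtain ⟨m', hm'⟩ := ZMod.natCast_zmod_surjective
        (n := p) (-(((b * x n₀ : ℤ) : ZMod p)) * ((c n₀ : ℤ) : ZMod p)⁻¹)
      set m := m' + p - 1 with hmdef
      have hm1 : m + 1 = m' + p := by have := hp.pos; omega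
      have hmZ : ((m + 1 : ℕ) : ZMod p)
          = -(((b * x n₀ : ℤ) : ZMod p)) * ((c n₀ : ℤ) : ZMod p)⁻¹ := by
        rw [hm1, ← hm']
        push_cast [ZMod.natCast_self]
        ring
      have hmod : ((b * x n₀ + ((m:ℤ)+1) * c n₀ : ℤ) : ZMod p) = 0 := by
        have hsplit : ((b * x n₀ + ((m:ℤ)+1) * c n₀ : ℤ) : ZMod p)
            = ((b * x n₀ : ℤ) : ZMod p) + ((m + 1 : ℕ) : ZMod p) * ((c n₀ : ℤ) : ZMod p) := by
          push_cast
          ring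
        rw [hsplit, hmZ]
        linear_combination (-(((b * x n₀ : ℤ) : ZMod p))) * (inv_mul_cancel₀ hC)
      rw [ZMod.intCast_zmod_eq_zero_iff_dvd] at hmod
      exact hnd ⟨n₀ + k*(m+1), by rw [hF m n₀]; exact hmod.mul_left _⟩
    simp only [Finset.mem_coe, Nat.mem_divisors]
    refine ⟨?_, Int.natAbs_ne_zero.mpr hM0⟩
    have := Int.natAbs_dvd_natAbs.mpr hdvd
    simpa using this
end

section
/- One has (1/2) · Σ_{i ≥ 1} Σ_{j ≥ 1} 2^{t_{i,j}} · μ(j)/(i²·j·φ(ij)) = (712671/1569610) · S, where t_{i,j} = #{d ∈ {4,5,11} : d | ij} if i is even, t_{i,j} = #{d ∈ {4,5} : d | ij} if i is odd and j is even, and t_{i,j} = #{d ∈ {5} : d | ij} if ij is odd, and the double series converges absolutely. -/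
open scoped BigOperators
open ArithmeticFunction

/-- The Euler product `S = ∏_{p prime} (1 - p/(p³-1))`. -/
noncomputable def eulerProdS : ℝ :=
  ∏' p : Nat.Primes, (1 - ((p : ℕ) : ℝ) / (((p : ℕ) : ℝ) ^ 3 - 1))

/-- The exponent `t_{i,j}` of Lemma 4.1. -/
def tExp (i j : ℕ) : ℕ :=
  if Even i then (({4, 5, 11} : Finset ℕ).filter fun d => d ∣ i * j).card
  else if Even j then (({4, 5} : Finset ℕ).filter fun d => d ∣ i * j).card
  else (({5} : Finset ℕ).filter fun d => d ∣ i * j).card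

/-- The `(i,j)`-term `2^{t_{i,j}} · μ(j)/(i²·j·φ(ij))` of the double series
computing (twice) the split density; the term is `0` unless `i, j ≥ 1`. -/
noncomputable def splitTerm (ij : ℕ × ℕ) : ℝ :=
  if 1 ≤ ij.1 ∧ 1 ≤ ij.2 then
    2 ^ tExp ij.1 ij.2 * (moebius ij.2 : ℝ) /
      (ij.1 ^ 2 * ij.2 * Nat.totient (ij.1 * ij.2))
  else 0

namespace SplitAux

open Nat ArithmeticFunction

/-- The function `m ↦ 1 + [2 ∣ m]` as an arithmetic function. -/
def tau2 : ArithmeticFunction ℤ :=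
  ⟨fun m => if m = 0 then 0 else if 2 ∣ m then 2 else 1, by simp⟩

lemma tau2_apply {m : ℕ} (hm : m ≠ 0) : tau2 m = if 2 ∣ m then 2 else 1 := if_neg hm

lemma tau2_mult : tau2.IsMultiplicative := by
  constructor
  · rw [tau2_apply one_ne_zero]
    norm_num
  · intro m n h
    rcases eq_or_ne m 0 with rfl | hm
    · rcases Nat.coprime_zero_left n |>.mp h with rfl
      simp [tau2]
    rcases eq_or_ne n 0 with rfl | hn
    · rcases Nat.coprime_zero_right m |>.mp h with rfl
      simp [tau2]
    rw [tau2_apply (Nat.mul_ne_zero hm hn), tau2_apply hm, tau2_apply hn]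
    have h2 : (2 : ℕ) ∣ m * n ↔ 2 ∣ m ∨ 2 ∣ n := Nat.Prime.dvd_mul Nat.prime_two
    by_cases h2m : 2 ∣ m <;> by_cases h2n : 2 ∣ n
    · exact absurd (Nat.dvd_gcd h2m h2n) (by rw [h]; norm_num)
    · simp [h2, h2m, h2n]
    · simp [h2, h2m, h2n]
    · simp [h2, h2m, h2n]

/-- `n ↦ μ(n)·n`. -/
noncomputable def muid : ArithmeticFunction ℤ :=
  (moebius).pmul (↑(ArithmeticFunction.id) : ArithmeticFunction ℤ)

lemma muid_apply (n : ℕ) : muid n = moebius n * n := by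
  simp [muid, pmul_apply, natCoe_apply, id_apply]

lemma muid_mult : muid.IsMultiplicative :=
  isMultiplicative_moebius.pmul (isMultiplicative_id.natCast)

/-- `H(n) = Σ_{d ∣ n} μ(d) d (1 + [2 ∣ n/d])`. -/
noncomputable def HAF : ArithmeticFunction ℤ := muid * tau2

/-- `G(n) = Σ_{d ∣ n} μ(d) d`. -/
noncomputable def GAF : ArithmeticFunction ℤ := muid * (↑(zeta) : ArithmeticFunction ℤ)

lemma HAF_mult : HAF.IsMultiplicative := muid_mult.mul tau2_mult

lemma GAF_mult : GAF.IsMultiplicative := muid_mult.mul (isMultiplicative_zeta.natCast)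

lemma div_ne_zero_of_mem_divisors {n d : ℕ} (hd : d ∈ n.divisors) : n / d ≠ 0 := by
  rcases Nat.mem_divisors.mp hd with ⟨hdvd, hn⟩
  have hdpos : 0 < d := Nat.pos_of_dvd_of_pos hdvd (Nat.pos_of_ne_zero hn)
  have := Nat.div_pos (Nat.le_of_dvd (Nat.pos_of_ne_zero hn) hdvd) hdpos
  omega

lemma HAF_apply (n : ℕ) :
    HAF n = ∑ d ∈ n.divisors, moebius d * d * (if 2 ∣ n / d then 2 else 1) := by
  rw [HAF, mul_apply, Nat.sum_divisorsAntidiagonal (fun a b => muid a * tau2 b)]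
  refine Finset.sum_congr rfl fun d hd => ?_
  rw [muid_apply, tau2_apply (div_ne_zero_of_mem_divisors hd)]

lemma GAF_apply (n : ℕ) :
    GAF n = ∑ d ∈ n.divisors, moebius d * d := by
  rw [GAF, mul_apply, Nat.sum_divisorsAntidiagonal (fun a b => muid a * (zeta : ArithmeticFunction ℤ) b)]
  refine Finset.sum_congr rfl fun d hd => ?_
  rw [muid_apply, natCoe_apply, zeta_apply_ne (div_ne_zero_of_mem_divisors hd)]
  push_cast
  ring

lemma not_two_dvd_pow {p k : ℕ} (hp : p.Prime) (hp2 : p ≠ 2) : ¬ (2 ∣ p ^ k) := by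
  intro h
  have := (Nat.prime_two.dvd_of_dvd_pow h)
  exact hp2 ((Nat.prime_dvd_prime_iff_eq Nat.prime_two hp).mp this).symm

lemma GAF_pp {p : ℕ} (hp : p.Prime) {e : ℕ} (he : e ≠ 0) : GAF (p ^ e) = 1 - (p : ℤ) := by
  rw [GAF_apply, Nat.sum_divisors_prime_pow hp]
  have hsub : ({0, 1} : Finset ℕ) ⊆ Finset.range (e + 1) := by
    intro x hx
    fin_cases hx <;> simp <;> omega
  rw [← Finset.sum_subset hsub (fun i _ hi => ?_)]
  · rw [Finset.sum_pair (by norm_num : (0:ℕ) ≠ 1)]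
    rw [pow_zero, pow_one, moebius_apply_one, moebius_apply_prime hp]
    push_cast; ring
  · have hi0 : i ≠ 0 := by intro h; exact hi (by simp [h])
    have hi1 : i ≠ 1 := by intro h; exact hi (by simp [h])
    rw [moebius_apply_prime_pow hp hi0, if_neg hi1]
    ring

lemma HAF_pp {p : ℕ} (hp : p.Prime) {e : ℕ} (he : e ≠ 0) :
    HAF (p ^ e) = if p = 2 then (if e = 1 then 0 else -2) else 1 - (p : ℤ) := by
  rw [HAF_apply, Nat.sum_divisors_prime_pow hp]
  have hsub : ({0, 1} : Finset ℕ) ⊆ Finset.range (e + 1) := by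
    intro x hx
    fin_cases hx <;> simp <;> omega
  rw [← Finset.sum_subset hsub (fun i _ hi => ?_)]
  · rw [Finset.sum_pair (by norm_num : (0:ℕ) ≠ 1)]
    have h0 : p ^ e / p ^ 0 = p ^ e := by simp
    have h1 : p ^ e / p ^ 1 = p ^ (e - 1) := Nat.pow_div (by omega) hp.pos
    rw [h0, h1, pow_zero, pow_one, moebius_apply_one, moebius_apply_prime hp]
    by_cases hp2 : p = 2
    · subst hp2
      by_cases he1 : e = 1
      · subst he1
        norm_num
      · have h2e : (2:ℕ) ∣ 2 ^ e := dvd_pow_self 2 he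
        have h2e1 : (2:ℕ) ∣ 2 ^ (e - 1) := dvd_pow_self 2 (by omega)
        rw [if_pos h2e, if_pos h2e1, if_pos rfl, if_neg he1]
        norm_num
    · rw [if_neg (not_two_dvd_pow hp hp2), if_neg (not_two_dvd_pow hp hp2), if_neg hp2]
      push_cast; ring
  · have hi0 : i ≠ 0 := by intro h; exact hi (by simp [h])
    have hi1 : i ≠ 1 := by intro h; exact hi (by simp [h])
    rw [moebius_apply_prime_pow hp hi0, if_neg hi1]
    ring

/-! ### The real-valued multiplicative functions -/

def P4 (n : ℕ) : ℤ := if 4 ∣ n then 2 else 1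
def P5 (n : ℕ) : ℤ := if 5 ∣ n then 2 else 1
def Q11 (n : ℕ) : ℤ := if 11 ∣ n then 0 else 1

lemma isPrimePow_four : IsPrimePow (4 : ℕ) := ⟨2, 2, Nat.prime_two.prime, by norm_num, by norm_num⟩
lemma isPrimePow_five : IsPrimePow (5 : ℕ) := ⟨5, 1, (by norm_num : Nat.Prime 5).prime, by norm_num, by norm_num⟩

lemma P4_mul {m n : ℕ} (h : m.Coprime n) : P4 (m * n) = P4 m * P4 n := by
  unfold P4
  simp only [h.isPrimePow_dvd_mul isPrimePow_four]
  by_cases h4m : 4 ∣ m <;> by_cases h4n : 4 ∣ n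
  · exfalso
    have h2m : (2:ℕ) ∣ m := dvd_trans (by norm_num) h4m
    have h2n : (2:ℕ) ∣ n := dvd_trans (by norm_num) h4n
    have hg := Nat.dvd_gcd h2m h2n
    rw [Nat.Coprime] at h
    rw [h] at hg
    norm_num at hg
  all_goals simp [h4m, h4n]

lemma P5_mul {m n : ℕ} (h : m.Coprime n) : P5 (m * n) = P5 m * P5 n := by
  unfold P5
  simp only [h.isPrimePow_dvd_mul isPrimePow_five]
  by_cases h5m : 5 ∣ m <;> by_cases h5n : 5 ∣ n
  · exfalso
    have hg := Nat.dvd_gcd h5m h5n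
    rw [Nat.Coprime] at h
    rw [h] at hg
    norm_num at hg
  all_goals simp [h5m, h5n]

lemma Q11_mul (m n : ℕ) : Q11 (m * n) = Q11 m * Q11 n := by
  unfold Q11
  have : (11 : ℕ) ∣ m * n ↔ 11 ∣ m ∨ 11 ∣ n := (by norm_num : Nat.Prime 11).dvd_mul
  by_cases hm : 11 ∣ m <;> by_cases hn : 11 ∣ n <;> simp [this, hm, hn]

noncomputable def gH (n : ℕ) : ℝ :=
  ((P4 n * P5 n * HAF n : ℤ) : ℝ) / ((n : ℝ) ^ 2 * (Nat.totient n : ℝ))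
noncomputable def gH11 (n : ℕ) : ℝ :=
  ((Q11 n * P4 n * P5 n * HAF n : ℤ) : ℝ) / ((n : ℝ) ^ 2 * (Nat.totient n : ℝ))
noncomputable def gG11 (n : ℕ) : ℝ :=
  ((Q11 n * P4 n * P5 n * GAF n : ℤ) : ℝ) / ((n : ℝ) ^ 2 * (Nat.totient n : ℝ))
noncomputable def sfun (n : ℕ) : ℝ :=
  ((GAF n : ℤ) : ℝ) / ((n : ℝ) ^ 2 * (Nat.totient n : ℝ))

lemma gH_one : gH 1 = 1 := by
  simp [gH, P4, P5, HAF_mult.1]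
lemma gH11_one : gH11 1 = 1 := by
  simp [gH11, P4, P5, Q11, HAF_mult.1]
lemma gG11_one : gG11 1 = 1 := by
  simp [gG11, P4, P5, Q11, GAF_mult.1]
lemma sfun_one : sfun 1 = 1 := by
  simp [sfun, GAF_mult.1]

lemma gH_zero : gH 0 = 0 := by simp [gH]
lemma gH11_zero : gH11 0 = 0 := by simp [gH11]
lemma gG11_zero : gG11 0 = 0 := by simp [gG11]
lemma sfun_zero : sfun 0 = 0 := by simp [sfun]

lemma gH_mul {m n : ℕ} (h : m.Coprime n) : gH (m * n) = gH m * gH n := by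
  unfold gH
  rw [P4_mul h, P5_mul h, HAF_mult.2 h, Nat.totient_mul h]
  push_cast
  ring

lemma gH11_mul {m n : ℕ} (h : m.Coprime n) : gH11 (m * n) = gH11 m * gH11 n := by
  unfold gH11
  rw [P4_mul h, P5_mul h, HAF_mult.2 h, Q11_mul, Nat.totient_mul h]
  push_cast
  ring

lemma gG11_mul {m n : ℕ} (h : m.Coprime n) : gG11 (m * n) = gG11 m * gG11 n := by
  unfold gG11
  rw [P4_mul h, P5_mul h, GAF_mult.2 h, Q11_mul, Nat.totient_mul h]
  push_cast
  ring

lemma sfun_mul {m n : ℕ} (h : m.Coprime n) : sfun (m * n) = sfun m * sfun n := by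
  unfold sfun
  rw [GAF_mult.2 h, Nat.totient_mul h]
  push_cast
  ring

/-! ### Bounds -/

lemma prime_of_mem_support {n p : ℕ} (hp : p ∈ n.factorization.support) : p.Prime := by
  rw [Nat.support_factorization] at hp
  exact Nat.prime_of_mem_primeFactors hp

lemma factorization_ne_zero_of_mem_support {n p : ℕ} (hp : p ∈ n.factorization.support) :
    n.factorization p ≠ 0 := Finsupp.mem_support_iff.mp hp

lemma abs_HAF_le (n : ℕ) : |HAF n| ≤ 2 * (Nat.totient n : ℤ) := by
  rcases eq_or_ne n 0 with rfl | hn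
  · simp
  rw [ArithmeticFunction.IsMultiplicative.multiplicative_factorization HAF HAF_mult hn,
    Nat.totient_eq_prod_factorization hn, Finsupp.prod, Finsupp.prod, Nat.cast_prod,
    Finset.abs_prod]
  calc ∏ p ∈ n.factorization.support, |HAF (p ^ n.factorization p)|
      ≤ ∏ p ∈ n.factorization.support,
        ((if p = 2 then 2 else 1) * ((p ^ (n.factorization p - 1) * (p - 1) : ℕ) : ℤ)) := by
        refine Finset.prod_le_prod (fun p _ => abs_nonneg _) (fun p hp => ?_)
        have hpp := prime_of_mem_support hp
        have hk := factorization_ne_zero_of_mem_support hp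
        have hp2' : 2 ≤ p := hpp.two_le
        have hp1 : (1 : ℤ) ≤ (p : ℤ) := by exact_mod_cast (by omega : 1 ≤ p)
        have hp2i : (2 : ℤ) ≤ (p : ℤ) := by exact_mod_cast hp2'
        have h1 : (1 : ℤ) ≤ (p : ℤ) ^ (n.factorization p - 1) := one_le_pow₀ hp1
        rw [HAF_pp hpp hk]
        push_cast [Nat.cast_sub (by omega : 1 ≤ p)]
        by_cases hp2 : p = 2
        · subst hp2
          by_cases he1 : n.factorization 2 = 1
          · rw [if_pos he1, if_pos rfl]
            simp only [abs_zero]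
            positivity
          · rw [if_neg he1, if_pos rfl]
            norm_num at h1 ⊢
            nlinarith
        · rw [if_neg hp2, if_neg hp2, one_mul, abs_sub_comm, abs_of_nonneg (by omega)]
          nlinarith
    _ = (∏ p ∈ n.factorization.support, (if p = 2 then (2:ℤ) else 1)) *
        ∏ p ∈ n.factorization.support, ((p ^ (n.factorization p - 1) * (p - 1) : ℕ) : ℤ) :=
        Finset.prod_mul_distrib
    _ ≤ 2 * ∏ p ∈ n.factorization.support, ((p ^ (n.factorization p - 1) * (p - 1) : ℕ) : ℤ) := by
        refine mul_le_mul_of_nonneg_right ?_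
          (Finset.prod_nonneg fun p hp => by positivity)
        rw [Finset.prod_ite_eq' n.factorization.support 2 (fun _ => (2:ℤ))]
        split <;> norm_num

lemma abs_GAF_le (n : ℕ) : |GAF n| ≤ (Nat.totient n : ℤ) := by
  rcases eq_or_ne n 0 with rfl | hn
  · simp
  rw [ArithmeticFunction.IsMultiplicative.multiplicative_factorization GAF GAF_mult hn,
    Nat.totient_eq_prod_factorization hn, Finsupp.prod, Finsupp.prod, Nat.cast_prod,
    Finset.abs_prod]
  refine Finset.prod_le_prod (fun p _ => abs_nonneg _) (fun p hp => ?_)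
  have hpp := prime_of_mem_support hp
  have hk := factorization_ne_zero_of_mem_support hp
  have hp2' : 2 ≤ p := hpp.two_le
  have hp1 : (1 : ℤ) ≤ (p : ℤ) := by exact_mod_cast (by omega : 1 ≤ p)
  have hp2i : (2 : ℤ) ≤ (p : ℤ) := by exact_mod_cast hp2'
  have h1 : (1 : ℤ) ≤ (p : ℤ) ^ (n.factorization p - 1) := one_le_pow₀ hp1
  rw [GAF_pp hpp hk]
  push_cast [Nat.cast_sub (by omega : 1 ≤ p)]
  rw [abs_sub_comm, abs_of_nonneg (by omega)]
  nlinarith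

lemma le_two_mul_totient_sq (n : ℕ) : n ≤ 2 * Nat.totient n ^ 2 := by
  rcases eq_or_ne n 0 with rfl | hn
  · simp
  conv_lhs => rw [← Nat.factorization_prod_pow_eq_self hn]
  rw [Nat.totient_eq_prod_factorization hn, Finsupp.prod, Finsupp.prod]
  calc ∏ p ∈ n.factorization.support, p ^ n.factorization p
      ≤ ∏ p ∈ n.factorization.support,
          ((if p = 2 then 2 else 1) * (p ^ (n.factorization p - 1) * (p - 1)) ^ 2) := by
        refine Finset.prod_le_prod' (fun p hp => ?_)
        have hpp := prime_of_mem_support hp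
        have hk := factorization_ne_zero_of_mem_support hp
        have hp2' : 2 ≤ p := hpp.two_le
        set k := n.factorization p with hkdef
        by_cases hp2 : p = 2
        · subst hp2
          rw [if_pos rfl]
          have : (2 ^ (k - 1) * (2 - 1)) ^ 2 = 2 ^ (2 * (k - 1)) := by
            rw [Nat.mul_one, ← pow_mul, Nat.mul_comm]
          rw [this]
          have hle : k ≤ 1 + 2 * (k - 1) := by omega
          calc 2 ^ k ≤ 2 ^ (1 + 2 * (k - 1)) := Nat.pow_le_pow_right (by norm_num) hle
            _ = 2 * 2 ^ (2 * (k - 1)) := by rw [pow_add, pow_one]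
        · rw [if_neg hp2, one_mul]
          have hp3 : 3 ≤ p := by
            rcases Nat.lt_or_ge p 3 with h | h
            · interval_cases p <;> simp_all
            · exact h
          have hq : p ≤ (p - 1) ^ 2 := by nlinarith [Nat.sub_add_cancel (by omega : 1 ≤ p)]
          calc p ^ k ≤ (p ^ (k - 1)) ^ 2 * p := by
                rw [← pow_mul]
                have : p ^ k = p ^ (k - 1) * p := by
                  conv_lhs => rw [← Nat.sub_add_cancel (by omega : 1 ≤ k), pow_succ]
                rw [this]
                exact Nat.mul_le_mul_right _ (Nat.pow_le_pow_right (by omega) (by omega))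
            _ ≤ (p ^ (k - 1)) ^ 2 * (p - 1) ^ 2 := Nat.mul_le_mul_left _ hq
            _ = (p ^ (k - 1) * (p - 1)) ^ 2 := (mul_pow _ _ _).symm
    _ = (∏ p ∈ n.factorization.support, (if p = 2 then 2 else 1)) *
        ∏ p ∈ n.factorization.support, (p ^ (n.factorization p - 1) * (p - 1)) ^ 2 :=
        Finset.prod_mul_distrib
    _ ≤ 2 * (∏ p ∈ n.factorization.support, p ^ (n.factorization p - 1) * (p - 1)) ^ 2 := by
        rw [← Finset.prod_pow]
        refine Nat.mul_le_mul_right _ ?_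
        rw [Finset.prod_ite_eq' n.factorization.support 2 (fun _ => (2:ℕ))]
        split <;> norm_num

/-! ### Summability -/

lemma summable_const_div_sq (c : ℝ) : Summable (fun n : ℕ => c / (n : ℝ) ^ 2) := by
  have := Real.summable_one_div_nat_pow.mpr (by norm_num : 1 < 2)
  simpa [div_eq_mul_inv, mul_comm, mul_assoc] using this.mul_left c

lemma abs_P4_le (n : ℕ) : |P4 n| ≤ 2 := by unfold P4; split <;> norm_num
lemma abs_P5_le (n : ℕ) : |P5 n| ≤ 2 := by unfold P5; split <;> norm_num
lemma abs_Q11_le (n : ℕ) : |Q11 n| ≤ 1 := by unfold Q11; split <;> norm_num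

lemma norm_div_le_of_num_le {a : ℝ} {n : ℕ} {c : ℝ} (hc : 0 ≤ c)
    (h : |a| ≤ c * (Nat.totient n : ℝ)) :
    ‖a / ((n : ℝ) ^ 2 * (Nat.totient n : ℝ))‖ ≤ c / (n : ℝ) ^ 2 := by
  rcases eq_or_ne n 0 with rfl | hn
  · simp
  have hφ : (0:ℝ) < (Nat.totient n : ℝ) := by
    exact_mod_cast Nat.totient_pos.mpr (Nat.pos_of_ne_zero hn)
  have hn2 : (0:ℝ) < (n:ℝ)^2 := by positivity
  rw [Real.norm_eq_abs, abs_div, abs_of_pos (mul_pos hn2 hφ)]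
  rw [div_le_div_iff₀ (mul_pos hn2 hφ) hn2]
  calc |a| * (n:ℝ)^2 ≤ (c * (Nat.totient n : ℝ)) * (n:ℝ)^2 := by
        exact mul_le_mul_of_nonneg_right h (le_of_lt hn2)
    _ = c * ((n:ℝ)^2 * (Nat.totient n : ℝ)) := by ring

lemma norm_gH_le (n : ℕ) : ‖gH n‖ ≤ 8 / (n : ℝ) ^ 2 := by
  refine norm_div_le_of_num_le (by norm_num) ?_
  have h : |P4 n * P5 n * HAF n| ≤ 8 * (Nat.totient n : ℤ) := by
    calc |P4 n * P5 n * HAF n| = |P4 n| * |P5 n| * |HAF n| := by rw [abs_mul, abs_mul]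
      _ ≤ 2 * 2 * (2 * (Nat.totient n : ℤ)) := by
          have := abs_HAF_le n
          gcongr <;> [exact abs_P4_le n; exact abs_P5_le n]
      _ = 8 * (Nat.totient n : ℤ) := by ring
  calc |((P4 n * P5 n * HAF n : ℤ) : ℝ)| = ((|P4 n * P5 n * HAF n| : ℤ) : ℝ) := by
        rw [Int.cast_abs]
    _ ≤ ((8 * (Nat.totient n : ℤ) : ℤ) : ℝ) := by exact_mod_cast h
    _ = 8 * (Nat.totient n : ℝ) := by push_cast; ring

lemma norm_gH11_le (n : ℕ) : ‖gH11 n‖ ≤ 8 / (n : ℝ) ^ 2 := by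
  refine norm_div_le_of_num_le (by norm_num) ?_
  have h : |Q11 n * P4 n * P5 n * HAF n| ≤ 8 * (Nat.totient n : ℤ) := by
    calc |Q11 n * P4 n * P5 n * HAF n| = |Q11 n| * |P4 n| * |P5 n| * |HAF n| := by
          rw [abs_mul, abs_mul, abs_mul]
      _ ≤ 1 * 2 * 2 * (2 * (Nat.totient n : ℤ)) := by
          have := abs_HAF_le n
          gcongr <;> [exact abs_Q11_le n; exact abs_P4_le n; exact abs_P5_le n]
      _ = 8 * (Nat.totient n : ℤ) := by ring
  calc |((Q11 n * P4 n * P5 n * HAF n : ℤ) : ℝ)| = ((|Q11 n * P4 n * P5 n * HAF n| : ℤ) : ℝ) := by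
        rw [Int.cast_abs]
    _ ≤ ((8 * (Nat.totient n : ℤ) : ℤ) : ℝ) := by exact_mod_cast h
    _ = 8 * (Nat.totient n : ℝ) := by push_cast; ring

lemma norm_gG11_le (n : ℕ) : ‖gG11 n‖ ≤ 4 / (n : ℝ) ^ 2 := by
  refine norm_div_le_of_num_le (by norm_num) ?_
  have h : |Q11 n * P4 n * P5 n * GAF n| ≤ 4 * (Nat.totient n : ℤ) := by
    calc |Q11 n * P4 n * P5 n * GAF n| = |Q11 n| * |P4 n| * |P5 n| * |GAF n| := by
          rw [abs_mul, abs_mul, abs_mul]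
      _ ≤ 1 * 2 * 2 * ((Nat.totient n : ℤ)) := by
          have := abs_GAF_le n
          gcongr <;> [exact abs_Q11_le n; exact abs_P4_le n; exact abs_P5_le n]
      _ = 4 * (Nat.totient n : ℤ) := by ring
  calc |((Q11 n * P4 n * P5 n * GAF n : ℤ) : ℝ)| = ((|Q11 n * P4 n * P5 n * GAF n| : ℤ) : ℝ) := by
        rw [Int.cast_abs]
    _ ≤ ((4 * (Nat.totient n : ℤ) : ℤ) : ℝ) := by exact_mod_cast h
    _ = 4 * (Nat.totient n : ℝ) := by push_cast; ring

lemma norm_sfun_le (n : ℕ) : ‖sfun n‖ ≤ 1 / (n : ℝ) ^ 2 := by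
  refine norm_div_le_of_num_le (by norm_num) ?_
  have h := abs_GAF_le n
  calc |((GAF n : ℤ) : ℝ)| = ((|GAF n| : ℤ) : ℝ) := by rw [Int.cast_abs]
    _ ≤ (((Nat.totient n : ℤ) : ℤ) : ℝ) := by exact_mod_cast h
    _ = 1 * (Nat.totient n : ℝ) := by push_cast; ring

lemma summable_norm_gH : Summable (fun n => ‖gH n‖) :=
  Summable.of_nonneg_of_le (fun _ => norm_nonneg _) norm_gH_le (summable_const_div_sq 8)
lemma summable_norm_gH11 : Summable (fun n => ‖gH11 n‖) :=
  Summable.of_nonneg_of_le (fun _ => norm_nonneg _) norm_gH11_le (summable_const_div_sq 8)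
lemma summable_norm_gG11 : Summable (fun n => ‖gG11 n‖) :=
  Summable.of_nonneg_of_le (fun _ => norm_nonneg _) norm_gG11_le (summable_const_div_sq 4)
lemma summable_norm_sfun : Summable (fun n => ‖sfun n‖) :=
  Summable.of_nonneg_of_le (fun _ => norm_nonneg _) norm_sfun_le (summable_const_div_sq 1)

/-! ### Geometric sums -/

lemma tsum_if_geometric (a b x : ℝ) (h0 : 0 ≤ x) (h1 : x < 1) :
    ∑' e : ℕ, (if e = 0 then (1:ℝ) else if e = 1 then b else a * x ^ e)
      = 1 + b + a * x ^ 2 * (1 - x)⁻¹ := by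
  set f : ℕ → ℝ := fun e => if e = 0 then (1:ℝ) else if e = 1 then b else a * x ^ e with hf
  have hgeo : Summable (fun e : ℕ => x ^ e) := summable_geometric_of_lt_one h0 h1
  have h2 : (fun e : ℕ => f (e + 2)) = fun e => (a * x ^ 2) * x ^ e := by
    funext e
    simp only [hf]
    rw [if_neg (by omega), if_neg (by omega)]
    ring
  have hs2 : Summable (fun e : ℕ => f (e + 2)) := by rw [h2]; exact hgeo.mul_left _
  have hs : Summable f := (summable_nat_add_iff 2).mp hs2
  have hs1 : Summable (fun e : ℕ => f (e + 1)) := (summable_nat_add_iff 1).mpr hs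
  rw [Summable.tsum_eq_zero_add hs, Summable.tsum_eq_zero_add hs1]
  have hstep : ∑' e : ℕ, f (e + 1 + 1) = a * x ^ 2 * (1 - x)⁻¹ := by
    have : (fun e : ℕ => f (e + 1 + 1)) = fun e => (a * x ^ 2) * x ^ e := h2
    rw [this, tsum_mul_left, tsum_geometric_of_lt_one h0 h1]
  rw [hstep]
  simp only [hf]
  norm_num
  ring

/-! ### Values at prime powers -/

lemma prime_dvd_prime_pow {q p e : ℕ} (hq : q.Prime) (hp : p.Prime) (he : e ≠ 0) :
    q ∣ p ^ e ↔ q = p := by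
  constructor
  · intro h
    exact (Nat.prime_dvd_prime_iff_eq hq hp).mp (hq.dvd_of_dvd_pow h)
  · rintro rfl
    exact dvd_pow_self q he

lemma P4_pp {p : ℕ} (hp : p.Prime) {e : ℕ} (he : e ≠ 0) :
    P4 (p ^ e) = if p = 2 ∧ 2 ≤ e then 2 else 1 := by
  unfold P4
  by_cases hp2 : p = 2
  · subst hp2
    have h4 : (4 : ℕ) = 2 ^ 2 := by norm_num
    have : (4 : ℕ) ∣ 2 ^ e ↔ 2 ≤ e := by
      rw [h4]
      exact Nat.pow_dvd_pow_iff_le_right (by norm_num)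
    by_cases h2e : 2 ≤ e
    · rw [if_pos (this.mpr h2e), if_pos ⟨rfl, h2e⟩]
    · rw [if_neg (fun hc => h2e (this.mp hc)), if_neg (fun hc => h2e hc.2)]
  · have h24 : ¬ (4 : ℕ) ∣ p ^ e := fun hc => not_two_dvd_pow hp hp2 (dvd_trans (by norm_num) hc)
    rw [if_neg h24, if_neg (fun hc => hp2 hc.1)]

lemma P5_pp {p : ℕ} (hp : p.Prime) {e : ℕ} (he : e ≠ 0) :
    P5 (p ^ e) = if p = 5 then 2 else 1 := by
  unfold P5
  by_cases h : p = 5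
  · subst h
    rw [if_pos (dvd_pow_self 5 he), if_pos rfl]
  · rw [if_neg (fun hc => h ((prime_dvd_prime_pow (by norm_num) hp he).mp hc).symm), if_neg h]

lemma Q11_pp {p : ℕ} (hp : p.Prime) {e : ℕ} (he : e ≠ 0) :
    Q11 (p ^ e) = if p = 11 then 0 else 1 := by
  unfold Q11
  by_cases h : p = 11
  · subst h
    rw [if_pos (dvd_pow_self 11 he), if_pos rfl]
  · rw [if_neg (fun hc => h ((prime_dvd_prime_pow (by norm_num) hp he).mp hc).symm), if_neg h]

lemma den_pp {p : ℕ} (hp : p.Prime) (k : ℕ) :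
    ((p ^ (k + 1) : ℕ) : ℝ) ^ 2 * (Nat.totient (p ^ (k + 1)) : ℝ)
      = (p : ℝ) ^ (3 * k + 2) * ((p : ℝ) - 1) := by
  rw [Nat.totient_prime_pow_succ hp]
  have h1 : 1 ≤ p := hp.one_le
  push_cast [Nat.cast_sub h1]
  ring

lemma pow_cancel {P : ℝ} (hP : P ≠ 0) (m : ℕ) :
    ((P ^ 3)⁻¹) ^ (m + 1) * P ^ (3 * m + 2) = P⁻¹ := by
  rw [inv_pow, ← pow_mul]
  have h1 : 3 * (m + 1) = (3 * m + 2) + 1 := by ring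
  rw [h1, pow_succ, mul_inv]
  have h2 : P ^ (3 * m + 2) ≠ 0 := pow_ne_zero _ hP
  field_simp

lemma val_shape {P : ℝ} (hP : 2 ≤ P) (m : ℕ) (c N : ℝ) (hN : N = c * P⁻¹ * (P - 1)) :
    N / (P ^ (3 * m + 2) * (P - 1)) = c * ((P ^ 3)⁻¹) ^ (m + 1) := by
  have hP0 : P ≠ 0 := by linarith
  have hP1 : P - 1 ≠ 0 := by intro h; nlinarith [h]
  rw [div_eq_iff (mul_ne_zero (pow_ne_zero _ hP0) hP1), hN]
  calc c * P⁻¹ * (P - 1)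
      = c * (((P ^ 3)⁻¹) ^ (m + 1) * P ^ (3 * m + 2)) * (P - 1) := by
        rw [pow_cancel hP0 m]
    _ = c * ((P ^ 3)⁻¹) ^ (m + 1) * (P ^ (3 * m + 2) * (P - 1)) := by ring

lemma prime_two_le_real {p : ℕ} (hp : p.Prime) : (2 : ℝ) ≤ (p : ℝ) := by
  exact_mod_cast hp.two_le

lemma gfun_pp_val {p : ℕ} (hp : p.Prime) (m : ℕ) (Nz : ℤ) (c : ℝ)
    (hN : (Nz : ℝ) = c * ((p:ℝ))⁻¹ * ((p:ℝ) - 1)) :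
    ((Nz : ℝ)) / (((p ^ (m + 1) : ℕ) : ℝ) ^ 2 * (Nat.totient (p ^ (m + 1)) : ℝ))
      = c * (((p : ℝ) ^ 3)⁻¹) ^ (m + 1) := by
  rw [den_pp hp m]
  exact val_shape (prime_two_le_real hp) m c _ hN

/-! #### sfun -/

lemma sfun_pp {p : ℕ} (hp : p.Prime) (m : ℕ) :
    sfun (p ^ (m + 1)) = (-(p:ℝ)) * (((p : ℝ) ^ 3)⁻¹) ^ (m + 1) := by
  unfold sfun
  rw [GAF_pp hp (Nat.succ_ne_zero m)]
  refine gfun_pp_val hp m _ _ ?_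
  have hP0 : (p : ℝ) ≠ 0 := by have := prime_two_le_real hp; linarith
  push_cast
  field_simp
  ring

/-! #### gH -/

lemma gH_pp_generic {p : ℕ} (hp : p.Prime) (hp2 : p ≠ 2) (hp5 : p ≠ 5) (m : ℕ) :
    gH (p ^ (m + 1)) = (-(p:ℝ)) * (((p : ℝ) ^ 3)⁻¹) ^ (m + 1) := by
  have h4 : P4 (p ^ (m + 1)) = 1 := by
    rw [P4_pp hp (Nat.succ_ne_zero m), if_neg (fun hc => hp2 hc.1)]
  have h5 : P5 (p ^ (m + 1)) = 1 := by
    rw [P5_pp hp (Nat.succ_ne_zero m), if_neg hp5]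
  have hH : HAF (p ^ (m + 1)) = 1 - (p : ℤ) := by
    rw [HAF_pp hp (Nat.succ_ne_zero m), if_neg hp2]
  unfold gH
  rw [h4, h5, hH, one_mul, one_mul]
  refine gfun_pp_val hp m _ _ ?_
  have hP0 : (p : ℝ) ≠ 0 := by have := prime_two_le_real hp; linarith
  push_cast
  field_simp
  ring

lemma gH_pp_five (m : ℕ) : gH (5 ^ (m + 1)) = (-10 : ℝ) * (((5 : ℝ) ^ 3)⁻¹) ^ (m + 1) := by
  have hp : Nat.Prime 5 := by norm_num
  have h4 : P4 (5 ^ (m + 1)) = 1 := by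
    rw [P4_pp hp (Nat.succ_ne_zero m), if_neg (by norm_num)]
  have h5 : P5 (5 ^ (m + 1)) = 2 := by
    rw [P5_pp hp (Nat.succ_ne_zero m), if_pos rfl]
  have hH : HAF (5 ^ (m + 1)) = -4 := by
    rw [HAF_pp hp (Nat.succ_ne_zero m), if_neg (by norm_num)]
    norm_num
  unfold gH
  rw [h4, h5, hH, show ((1 : ℤ) * 2 * (-4) : ℤ) = (-8 : ℤ) by norm_num]
  have := gfun_pp_val hp m (-8) (-10) (by push_cast; norm_num)
  exact_mod_cast this

lemma gH_pp_two_one : gH (2 ^ 1) = 0 := by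
  have hp : Nat.Prime 2 := Nat.prime_two
  have hH : HAF (2 ^ 1) = 0 := by
    rw [HAF_pp hp one_ne_zero, if_pos rfl, if_pos rfl]
  unfold gH
  rw [hH]
  norm_num

lemma gH_pp_two (m : ℕ) : gH (2 ^ (m + 2)) = (-8 : ℝ) * (((2 : ℝ) ^ 3)⁻¹) ^ (m + 2) := by
  have hp : Nat.Prime 2 := Nat.prime_two
  have hne : m + 2 ≠ 0 := by omega
  have h4 : P4 (2 ^ (m + 2)) = 2 := by
    rw [P4_pp hp hne, if_pos ⟨rfl, by omega⟩]
  have h5 : P5 (2 ^ (m + 2)) = 1 := by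
    rw [P5_pp hp hne, if_neg (by norm_num)]
  have hH : HAF (2 ^ (m + 2)) = -2 := by
    rw [HAF_pp hp hne, if_pos rfl, if_neg (by omega)]
  unfold gH
  rw [h4, h5, hH, show ((2 : ℤ) * 1 * (-2) : ℤ) = (-4 : ℤ) by norm_num,
    show m + 2 = (m + 1) + 1 by ring]
  have := gfun_pp_val hp (m + 1) (-4) (-8) (by push_cast; norm_num)
  exact_mod_cast this

/-! #### gH11 -/

lemma gH11_pp_generic {p : ℕ} (hp : p.Prime) (hp2 : p ≠ 2) (hp5 : p ≠ 5) (hp11 : p ≠ 11)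
    (m : ℕ) : gH11 (p ^ (m + 1)) = (-(p:ℝ)) * (((p : ℝ) ^ 3)⁻¹) ^ (m + 1) := by
  have hq : Q11 (p ^ (m + 1)) = 1 := by
    rw [Q11_pp hp (Nat.succ_ne_zero m), if_neg hp11]
  have h4 : P4 (p ^ (m + 1)) = 1 := by
    rw [P4_pp hp (Nat.succ_ne_zero m), if_neg (fun hc => hp2 hc.1)]
  have h5 : P5 (p ^ (m + 1)) = 1 := by
    rw [P5_pp hp (Nat.succ_ne_zero m), if_neg hp5]
  have hH : HAF (p ^ (m + 1)) = 1 - (p : ℤ) := by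
    rw [HAF_pp hp (Nat.succ_ne_zero m), if_neg hp2]
  unfold gH11
  rw [hq, h4, h5, hH, one_mul, one_mul, one_mul]
  refine gfun_pp_val hp m _ _ ?_
  have hP0 : (p : ℝ) ≠ 0 := by have := prime_two_le_real hp; linarith
  push_cast
  field_simp
  ring

lemma gH11_pp_eleven (m : ℕ) : gH11 (11 ^ (m + 1)) = 0 := by
  have hp : Nat.Prime 11 := by norm_num
  have hq : Q11 (11 ^ (m + 1)) = 0 := by
    rw [Q11_pp hp (Nat.succ_ne_zero m), if_pos rfl]
  unfold gH11
  rw [hq]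
  norm_num

lemma gH11_pp_five (m : ℕ) : gH11 (5 ^ (m + 1)) = (-10 : ℝ) * (((5 : ℝ) ^ 3)⁻¹) ^ (m + 1) := by
  have hp : Nat.Prime 5 := by norm_num
  have hq : Q11 (5 ^ (m + 1)) = 1 := by
    rw [Q11_pp hp (Nat.succ_ne_zero m), if_neg (by norm_num)]
  have h4 : P4 (5 ^ (m + 1)) = 1 := by
    rw [P4_pp hp (Nat.succ_ne_zero m), if_neg (by norm_num)]
  have h5 : P5 (5 ^ (m + 1)) = 2 := by
    rw [P5_pp hp (Nat.succ_ne_zero m), if_pos rfl]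
  have hH : HAF (5 ^ (m + 1)) = -4 := by
    rw [HAF_pp hp (Nat.succ_ne_zero m), if_neg (by norm_num)]
    norm_num
  unfold gH11
  rw [hq, h4, h5, hH, show ((1 : ℤ) * 1 * 2 * (-4) : ℤ) = (-8 : ℤ) by norm_num]
  have := gfun_pp_val hp m (-8) (-10) (by push_cast; norm_num)
  exact_mod_cast this

lemma gH11_pp_two_one : gH11 (2 ^ 1) = 0 := by
  have hp : Nat.Prime 2 := Nat.prime_two
  have hH : HAF (2 ^ 1) = 0 := by
    rw [HAF_pp hp one_ne_zero, if_pos rfl, if_pos rfl]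
  unfold gH11
  rw [hH]
  norm_num

lemma gH11_pp_two (m : ℕ) : gH11 (2 ^ (m + 2)) = (-8 : ℝ) * (((2 : ℝ) ^ 3)⁻¹) ^ (m + 2) := by
  have hp : Nat.Prime 2 := Nat.prime_two
  have hne : m + 2 ≠ 0 := by omega
  have hq : Q11 (2 ^ (m + 2)) = 1 := by
    rw [Q11_pp hp hne, if_neg (by norm_num)]
  have h4 : P4 (2 ^ (m + 2)) = 2 := by
    rw [P4_pp hp hne, if_pos ⟨rfl, by omega⟩]
  have h5 : P5 (2 ^ (m + 2)) = 1 := by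
    rw [P5_pp hp hne, if_neg (by norm_num)]
  have hH : HAF (2 ^ (m + 2)) = -2 := by
    rw [HAF_pp hp hne, if_pos rfl, if_neg (by omega)]
  unfold gH11
  rw [hq, h4, h5, hH, show ((1 : ℤ) * 2 * 1 * (-2) : ℤ) = (-4 : ℤ) by norm_num,
    show m + 2 = (m + 1) + 1 by ring]
  have := gfun_pp_val hp (m + 1) (-4) (-8) (by push_cast; norm_num)
  exact_mod_cast this

/-! #### gG11 -/

lemma gG11_pp_generic {p : ℕ} (hp : p.Prime) (hp2 : p ≠ 2) (hp5 : p ≠ 5) (hp11 : p ≠ 11)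
    (m : ℕ) : gG11 (p ^ (m + 1)) = (-(p:ℝ)) * (((p : ℝ) ^ 3)⁻¹) ^ (m + 1) := by
  have hq : Q11 (p ^ (m + 1)) = 1 := by
    rw [Q11_pp hp (Nat.succ_ne_zero m), if_neg hp11]
  have h4 : P4 (p ^ (m + 1)) = 1 := by
    rw [P4_pp hp (Nat.succ_ne_zero m), if_neg (fun hc => hp2 hc.1)]
  have h5 : P5 (p ^ (m + 1)) = 1 := by
    rw [P5_pp hp (Nat.succ_ne_zero m), if_neg hp5]
  have hG : GAF (p ^ (m + 1)) = 1 - (p : ℤ) := GAF_pp hp (Nat.succ_ne_zero m)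
  unfold gG11
  rw [hq, h4, h5, hG, one_mul, one_mul, one_mul]
  refine gfun_pp_val hp m _ _ ?_
  have hP0 : (p : ℝ) ≠ 0 := by have := prime_two_le_real hp; linarith
  push_cast
  field_simp
  ring

lemma gG11_pp_eleven (m : ℕ) : gG11 (11 ^ (m + 1)) = 0 := by
  have hp : Nat.Prime 11 := by norm_num
  have hq : Q11 (11 ^ (m + 1)) = 0 := by
    rw [Q11_pp hp (Nat.succ_ne_zero m), if_pos rfl]
  unfold gG11
  rw [hq]
  norm_num

lemma gG11_pp_five (m : ℕ) : gG11 (5 ^ (m + 1)) = (-10 : ℝ) * (((5 : ℝ) ^ 3)⁻¹) ^ (m + 1) := by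
  have hp : Nat.Prime 5 := by norm_num
  have hq : Q11 (5 ^ (m + 1)) = 1 := by
    rw [Q11_pp hp (Nat.succ_ne_zero m), if_neg (by norm_num)]
  have h4 : P4 (5 ^ (m + 1)) = 1 := by
    rw [P4_pp hp (Nat.succ_ne_zero m), if_neg (by norm_num)]
  have h5 : P5 (5 ^ (m + 1)) = 2 := by
    rw [P5_pp hp (Nat.succ_ne_zero m), if_pos rfl]
  have hG : GAF (5 ^ (m + 1)) = -4 := by
    rw [GAF_pp hp (Nat.succ_ne_zero m)]
    norm_num
  unfold gG11
  rw [hq, h4, h5, hG, show ((1 : ℤ) * 1 * 2 * (-4) : ℤ) = (-8 : ℤ) by norm_num]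
  have := gfun_pp_val hp m (-8) (-10) (by push_cast; norm_num)
  exact_mod_cast this

lemma gG11_pp_two_one : gG11 (2 ^ 1) = -(1/4) := by
  have hp : Nat.Prime 2 := Nat.prime_two
  have hq : Q11 (2 ^ 1) = 1 := by
    rw [Q11_pp hp one_ne_zero, if_neg (by norm_num)]
  have h4 : P4 (2 ^ 1) = 1 := by
    rw [P4_pp hp one_ne_zero, if_neg (by omega)]
  have h5 : P5 (2 ^ 1) = 1 := by
    rw [P5_pp hp one_ne_zero, if_neg (by norm_num)]
  have hG : GAF (2 ^ 1) = -1 := by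
    rw [GAF_pp hp one_ne_zero]
    norm_num
  unfold gG11
  rw [hq, h4, h5, hG]
  norm_num [Nat.totient_two]

lemma gG11_pp_two (m : ℕ) : gG11 (2 ^ (m + 2)) = (-4 : ℝ) * (((2 : ℝ) ^ 3)⁻¹) ^ (m + 2) := by
  have hp : Nat.Prime 2 := Nat.prime_two
  have hne : m + 2 ≠ 0 := by omega
  have hq : Q11 (2 ^ (m + 2)) = 1 := by
    rw [Q11_pp hp hne, if_neg (by norm_num)]
  have h4 : P4 (2 ^ (m + 2)) = 2 := by
    rw [P4_pp hp hne, if_pos ⟨rfl, by omega⟩]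
  have h5 : P5 (2 ^ (m + 2)) = 1 := by
    rw [P5_pp hp hne, if_neg (by norm_num)]
  have hG : GAF (2 ^ (m + 2)) = -1 := by
    rw [GAF_pp hp hne]
    norm_num
  unfold gG11
  rw [hq, h4, h5, hG, show ((1 : ℤ) * 2 * 1 * (-1) : ℤ) = (-2 : ℤ) by norm_num,
    show m + 2 = (m + 1) + 1 by ring]
  have := gfun_pp_val hp (m + 1) (-2) (-4) (by push_cast; norm_num)
  exact_mod_cast this

/-! ### Local factor sums -/

lemma local_sum_eval (g : ℕ → ℝ) {p : ℕ} (hp : p.Prime) (b c : ℝ)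
    (h1 : g 1 = 1) (hv1 : g (p ^ 1) = b)
    (hv : ∀ k : ℕ, g (p ^ (k + 2)) = c * (((p:ℝ) ^ 3)⁻¹) ^ (k + 2)) :
    ∑' e : ℕ, g (p ^ e) = 1 + b + c * (((p:ℝ) ^ 3)⁻¹) ^ 2 * (1 - ((p:ℝ) ^ 3)⁻¹)⁻¹ := by
  have hP := prime_two_le_real hp
  have hx0 : (0:ℝ) ≤ ((p:ℝ) ^ 3)⁻¹ := by positivity
  have hx1 : ((p:ℝ) ^ 3)⁻¹ < 1 := by
    have h8 : (2:ℝ) ^ 3 ≤ (p:ℝ) ^ 3 := pow_le_pow_left₀ (by norm_num) hP 3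
    have : (1:ℝ) < (p:ℝ) ^ 3 := by norm_num at h8 ⊢; linarith
    exact inv_lt_one_of_one_lt₀ this
  have hfun : (fun e : ℕ => g (p ^ e))
      = fun e => if e = 0 then 1 else if e = 1 then b else c * (((p:ℝ) ^ 3)⁻¹) ^ e := by
    funext e
    match e with
    | 0 => simpa using h1
    | 1 => simpa using hv1
    | (k+2) =>
      rw [if_neg (by omega), if_neg (by omega)]
      exact hv k
  rw [hfun, tsum_if_geometric _ _ _ hx0 hx1]

lemma generic_total {P : ℝ} (hP : 2 ≤ P) :
    1 + -P * ((P ^ 3)⁻¹) ^ 1 + -P * ((P ^ 3)⁻¹) ^ 2 * (1 - (P ^ 3)⁻¹)⁻¹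
      = 1 - P / (P ^ 3 - 1) := by
  have h0 : P ≠ 0 := by linarith
  have h3 : (0:ℝ) < P ^ 3 - 1 := by
    have h8 : (2:ℝ) ^ 3 ≤ P ^ 3 := pow_le_pow_left₀ (by norm_num) hP 3
    norm_num at h8; linarith
  have h3' : P ^ 3 ≠ 0 := by positivity
  have hx : 1 - (P ^ 3)⁻¹ = (P ^ 3 - 1) / P ^ 3 := by field_simp
  rw [hx]
  have h31 : P ^ 3 - 1 ≠ 0 := ne_of_gt h3
  field_simp
  ring

lemma sfun_localsum {p : ℕ} (hp : p.Prime) :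
    ∑' e : ℕ, sfun (p ^ e) = 1 - (p:ℝ) / ((p:ℝ) ^ 3 - 1) := by
  rw [local_sum_eval sfun hp (-(p:ℝ) * (((p:ℝ) ^ 3)⁻¹) ^ 1) (-(p:ℝ)) sfun_one
    (sfun_pp hp 0) (fun k => sfun_pp hp (k + 1))]
  exact generic_total (prime_two_le_real hp)

lemma gH_localsum_generic {p : ℕ} (hp : p.Prime) (hp2 : p ≠ 2) (hp5 : p ≠ 5) :
    ∑' e : ℕ, gH (p ^ e) = 1 - (p:ℝ) / ((p:ℝ) ^ 3 - 1) := by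
  rw [local_sum_eval gH hp (-(p:ℝ) * (((p:ℝ) ^ 3)⁻¹) ^ 1) (-(p:ℝ)) gH_one
    (gH_pp_generic hp hp2 hp5 0) (fun k => gH_pp_generic hp hp2 hp5 (k + 1))]
  exact generic_total (prime_two_le_real hp)

lemma gH_localsum_two : ∑' e : ℕ, gH (2 ^ e) = 6 / 7 := by
  have h := local_sum_eval gH Nat.prime_two 0 (-8) gH_one (by exact_mod_cast gH_pp_two_one)
    (fun k => by exact_mod_cast gH_pp_two k)
  rw [show ((2:ℕ):ℝ) = (2:ℝ) by norm_num] at h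
  rw [h]
  norm_num

lemma gH_localsum_five : ∑' e : ℕ, gH (5 ^ e) = 57 / 62 := by
  have h := local_sum_eval gH (by norm_num : Nat.Prime 5) (-10 * (((5:ℝ) ^ 3)⁻¹) ^ 1) (-10)
    gH_one (by exact_mod_cast gH_pp_five 0) (fun k => by exact_mod_cast gH_pp_five (k + 1))
  rw [show ((5:ℕ):ℝ) = (5:ℝ) by norm_num] at h
  rw [h]
  norm_num

lemma gH11_localsum_generic {p : ℕ} (hp : p.Prime) (hp2 : p ≠ 2) (hp5 : p ≠ 5) (hp11 : p ≠ 11) :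
    ∑' e : ℕ, gH11 (p ^ e) = 1 - (p:ℝ) / ((p:ℝ) ^ 3 - 1) := by
  rw [local_sum_eval gH11 hp (-(p:ℝ) * (((p:ℝ) ^ 3)⁻¹) ^ 1) (-(p:ℝ)) gH11_one
    (gH11_pp_generic hp hp2 hp5 hp11 0) (fun k => gH11_pp_generic hp hp2 hp5 hp11 (k + 1))]
  exact generic_total (prime_two_le_real hp)

lemma gH11_localsum_two : ∑' e : ℕ, gH11 (2 ^ e) = 6 / 7 := by
  have h := local_sum_eval gH11 Nat.prime_two 0 (-8) gH11_one (by exact_mod_cast gH11_pp_two_one)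
    (fun k => by exact_mod_cast gH11_pp_two k)
  rw [show ((2:ℕ):ℝ) = (2:ℝ) by norm_num] at h
  rw [h]
  norm_num

lemma gH11_localsum_five : ∑' e : ℕ, gH11 (5 ^ e) = 57 / 62 := by
  have h := local_sum_eval gH11 (by norm_num : Nat.Prime 5) (-10 * (((5:ℝ) ^ 3)⁻¹) ^ 1) (-10)
    gH11_one (by exact_mod_cast gH11_pp_five 0) (fun k => by exact_mod_cast gH11_pp_five (k + 1))
  rw [show ((5:ℕ):ℝ) = (5:ℝ) by norm_num] at h
  rw [h]
  norm_num

lemma gH11_localsum_eleven : ∑' e : ℕ, gH11 (11 ^ e) = 1 := by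
  have h := local_sum_eval gH11 (by norm_num : Nat.Prime 11) 0 0
    gH11_one (by exact_mod_cast gH11_pp_eleven 0) (fun k => by
      rw [gH11_pp_eleven (k + 1)]
      norm_num)
  rw [h]
  norm_num

lemma gG11_localsum_generic {p : ℕ} (hp : p.Prime) (hp2 : p ≠ 2) (hp5 : p ≠ 5) (hp11 : p ≠ 11) :
    ∑' e : ℕ, gG11 (p ^ e) = 1 - (p:ℝ) / ((p:ℝ) ^ 3 - 1) := by
  rw [local_sum_eval gG11 hp (-(p:ℝ) * (((p:ℝ) ^ 3)⁻¹) ^ 1) (-(p:ℝ)) gG11_one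
    (gG11_pp_generic hp hp2 hp5 hp11 0) (fun k => gG11_pp_generic hp hp2 hp5 hp11 (k + 1))]
  exact generic_total (prime_two_le_real hp)

lemma gG11_localsum_two : ∑' e : ℕ, gG11 (2 ^ e) = 19 / 28 := by
  have h := local_sum_eval gG11 Nat.prime_two (-(1/4)) (-4) gG11_one
    (by exact_mod_cast gG11_pp_two_one) (fun k => by exact_mod_cast gG11_pp_two k)
  rw [show ((2:ℕ):ℝ) = (2:ℝ) by norm_num] at h
  rw [h]
  norm_num

lemma gG11_localsum_five : ∑' e : ℕ, gG11 (5 ^ e) = 57 / 62 := by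
  have h := local_sum_eval gG11 (by norm_num : Nat.Prime 5) (-10 * (((5:ℝ) ^ 3)⁻¹) ^ 1) (-10)
    gG11_one (by exact_mod_cast gG11_pp_five 0) (fun k => by exact_mod_cast gG11_pp_five (k + 1))
  rw [show ((5:ℕ):ℝ) = (5:ℝ) by norm_num] at h
  rw [h]
  norm_num

lemma gG11_localsum_eleven : ∑' e : ℕ, gG11 (11 ^ e) = 1 := by
  have h := local_sum_eval gG11 (by norm_num : Nat.Prime 11) 0 0
    gG11_one (by exact_mod_cast gG11_pp_eleven 0) (fun k => by
      rw [gG11_pp_eleven (k + 1)]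
      norm_num)
  rw [h]
  norm_num

/-! ### Euler products -/

noncomputable def baseP : Nat.Primes → ℝ := fun p => 1 - ((p:ℕ):ℝ) / (((p:ℕ):ℝ) ^ 3 - 1)

def pr2 : Nat.Primes := ⟨2, Nat.prime_two⟩
def pr5 : Nat.Primes := ⟨5, by norm_num⟩
def pr11 : Nat.Primes := ⟨11, by norm_num⟩

lemma pr2_ne_pr5 : pr2 ≠ pr5 := by
  intro h
  exact absurd (congrArg Subtype.val h) (by norm_num [pr2, pr5])
lemma pr2_ne_pr11 : pr2 ≠ pr11 := by
  intro h
  exact absurd (congrArg Subtype.val h) (by norm_num [pr2, pr11])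
lemma pr5_ne_pr11 : pr5 ≠ pr11 := by
  intro h
  exact absurd (congrArg Subtype.val h) (by norm_num [pr5, pr11])

lemma hasProd_baseP : HasProd baseP (∑' n, sfun n) := by
  have h := EulerProduct.eulerProduct_hasProd (f := sfun) sfun_one
    (fun {m n} hmn => sfun_mul hmn) summable_norm_sfun sfun_zero
  have hfun : (fun p : Nat.Primes => ∑' e : ℕ, sfun ((p : ℕ) ^ e)) = baseP := by
    funext p
    exact sfun_localsum p.prop
  rwa [hfun] at h

lemma eulerProdS_eq : eulerProdS = ∑' n, sfun n := by
  have : eulerProdS = ∏' p : Nat.Primes, baseP p := by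
    unfold eulerProdS baseP
    rfl
  rw [this]
  exact hasProd_baseP.tprod_eq

lemma hasProd_baseP' : HasProd baseP eulerProdS := by
  rw [eulerProdS_eq]
  exact hasProd_baseP

noncomputable def cgH : Nat.Primes → ℝ :=
  fun p => if (p:ℕ) = 2 then 6/5 else if (p:ℕ) = 5 then 114/119 else 1
noncomputable def cgH11 : Nat.Primes → ℝ :=
  fun p => if (p:ℕ) = 2 then 6/5 else if (p:ℕ) = 5 then 114/119 else
    if (p:ℕ) = 11 then 1330/1319 else 1
noncomputable def cgG11 : Nat.Primes → ℝ :=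
  fun p => if (p:ℕ) = 2 then 19/20 else if (p:ℕ) = 5 then 114/119 else
    if (p:ℕ) = 11 then 1330/1319 else 1

lemma localfactor_gH (p : Nat.Primes) :
    ∑' e : ℕ, gH ((p:ℕ) ^ e) = cgH p * baseP p := by
  obtain ⟨q, hq⟩ := p
  simp only [cgH, baseP]
  by_cases h2 : q = 2
  · subst h2
    rw [gH_localsum_two]
    norm_num
  by_cases h5 : q = 5
  · subst h5
    rw [gH_localsum_five]
    norm_num
  · rw [gH_localsum_generic hq h2 h5]
    rw [if_neg h2, if_neg h5, one_mul]

lemma localfactor_gH11 (p : Nat.Primes) :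
    ∑' e : ℕ, gH11 ((p:ℕ) ^ e) = cgH11 p * baseP p := by
  obtain ⟨q, hq⟩ := p
  simp only [cgH11, baseP]
  by_cases h2 : q = 2
  · subst h2
    rw [gH11_localsum_two]
    norm_num
  by_cases h5 : q = 5
  · subst h5
    rw [gH11_localsum_five]
    norm_num
  by_cases h11 : q = 11
  · subst h11
    rw [gH11_localsum_eleven]
    norm_num
  · rw [gH11_localsum_generic hq h2 h5 h11]
    rw [if_neg h2, if_neg h5, if_neg h11, one_mul]

lemma localfactor_gG11 (p : Nat.Primes) :
    ∑' e : ℕ, gG11 ((p:ℕ) ^ e) = cgG11 p * baseP p := by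
  obtain ⟨q, hq⟩ := p
  simp only [cgG11, baseP]
  by_cases h2 : q = 2
  · subst h2
    rw [gG11_localsum_two]
    norm_num
  by_cases h5 : q = 5
  · subst h5
    rw [gG11_localsum_five]
    norm_num
  by_cases h11 : q = 11
  · subst h11
    rw [gG11_localsum_eleven]
    norm_num
  · rw [gG11_localsum_generic hq h2 h5 h11]
    rw [if_neg h2, if_neg h5, if_neg h11, one_mul]

lemma hasProd_cgH : HasProd cgH ((6/5) * (114/119)) := by
  have h : ∀ p ∉ ({pr2, pr5} : Finset Nat.Primes), cgH p = 1 := by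
    intro p hp
    simp only [Finset.mem_insert, Finset.mem_singleton] at hp
    push_neg at hp
    have h2' : (p:ℕ) ≠ 2 := fun hc => hp.1 (Subtype.ext hc)
    have h5' : (p:ℕ) ≠ 5 := fun hc => hp.2 (Subtype.ext hc)
    simp [cgH, h2', h5']
  have hh := hasProd_prod_of_ne_finset_one (L := SummationFilter.unconditional _) h
  rwa [Finset.prod_pair pr2_ne_pr5, show cgH pr2 = 6/5 by simp [cgH, pr2],
    show cgH pr5 = 114/119 by simp [cgH, pr5]] at hh

lemma hasProd_cgH11 : HasProd cgH11 ((6/5) * ((114/119) * (1330/1319))) := by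
  have h : ∀ p ∉ ({pr2, pr5, pr11} : Finset Nat.Primes), cgH11 p = 1 := by
    intro p hp
    simp only [Finset.mem_insert, Finset.mem_singleton] at hp
    push_neg at hp
    have h2' : (p:ℕ) ≠ 2 := fun hc => hp.1 (Subtype.ext hc)
    have h5' : (p:ℕ) ≠ 5 := fun hc => hp.2.1 (Subtype.ext hc)
    have h11' : (p:ℕ) ≠ 11 := fun hc => hp.2.2 (Subtype.ext hc)
    simp [cgH11, h2', h5', h11']
  have hh := hasProd_prod_of_ne_finset_one (L := SummationFilter.unconditional _) h
  rwa [Finset.prod_insert (by simp [Finset.mem_insert, pr2_ne_pr5, pr2_ne_pr11]),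
    Finset.prod_pair pr5_ne_pr11,
    show cgH11 pr2 = 6/5 by simp [cgH11, pr2],
    show cgH11 pr5 = 114/119 by simp [cgH11, pr5],
    show cgH11 pr11 = 1330/1319 by simp [cgH11, pr11]] at hh

lemma hasProd_cgG11 : HasProd cgG11 ((19/20) * ((114/119) * (1330/1319))) := by
  have h : ∀ p ∉ ({pr2, pr5, pr11} : Finset Nat.Primes), cgG11 p = 1 := by
    intro p hp
    simp only [Finset.mem_insert, Finset.mem_singleton] at hp
    push_neg at hp
    have h2' : (p:ℕ) ≠ 2 := fun hc => hp.1 (Subtype.ext hc)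
    have h5' : (p:ℕ) ≠ 5 := fun hc => hp.2.1 (Subtype.ext hc)
    have h11' : (p:ℕ) ≠ 11 := fun hc => hp.2.2 (Subtype.ext hc)
    simp [cgG11, h2', h5', h11']
  have hh := hasProd_prod_of_ne_finset_one (L := SummationFilter.unconditional _) h
  rwa [Finset.prod_insert (by simp [Finset.mem_insert, pr2_ne_pr5, pr2_ne_pr11]),
    Finset.prod_pair pr5_ne_pr11,
    show cgG11 pr2 = 19/20 by simp [cgG11, pr2],
    show cgG11 pr5 = 114/119 by simp [cgG11, pr5],
    show cgG11 pr11 = 1330/1319 by simp [cgG11, pr11]] at hh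

lemma tsum_gH_eq : ∑' n, gH n = ((6/5) * (114/119)) * eulerProdS := by
  have hEP := EulerProduct.eulerProduct_hasProd (f := gH) gH_one
    (fun {m n} hmn => gH_mul hmn) summable_norm_gH gH_zero
  have hfun : (fun p : Nat.Primes => ∑' e : ℕ, gH ((p:ℕ) ^ e)) = fun p => cgH p * baseP p :=
    funext localfactor_gH
  rw [hfun] at hEP
  exact hEP.unique (hasProd_cgH.mul hasProd_baseP')

lemma tsum_gH11_eq : ∑' n, gH11 n = ((6/5) * ((114/119) * (1330/1319))) * eulerProdS := by
  have hEP := EulerProduct.eulerProduct_hasProd (f := gH11) gH11_one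
    (fun {m n} hmn => gH11_mul hmn) summable_norm_gH11 gH11_zero
  have hfun : (fun p : Nat.Primes => ∑' e : ℕ, gH11 ((p:ℕ) ^ e)) = fun p => cgH11 p * baseP p :=
    funext localfactor_gH11
  rw [hfun] at hEP
  exact hEP.unique (hasProd_cgH11.mul hasProd_baseP')

lemma tsum_gG11_eq : ∑' n, gG11 n = ((19/20) * ((114/119) * (1330/1319))) * eulerProdS := by
  have hEP := EulerProduct.eulerProduct_hasProd (f := gG11) gG11_one
    (fun {m n} hmn => gG11_mul hmn) summable_norm_gG11 gG11_zero
  have hfun : (fun p : Nat.Primes => ∑' e : ℕ, gG11 ((p:ℕ) ^ e)) = fun p => cgG11 p * baseP p :=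
    funext localfactor_gG11
  rw [hfun] at hEP
  exact hEP.unique (hasProd_cgG11.mul hasProd_baseP')

/-! ### The combinatorial identity -/

lemma card_filter_triple (n : ℕ) :
    (({4, 5, 11} : Finset ℕ).filter fun d => d ∣ n).card
      = (if 4 ∣ n then 1 else 0) + (if 5 ∣ n then 1 else 0) + (if 11 ∣ n then 1 else 0) := by
  rw [Finset.card_filter]
  rw [show ({4, 5, 11} : Finset ℕ) = insert 4 (insert 5 {11}) from rfl]
  rw [Finset.sum_insert (by decide), Finset.sum_insert (by decide), Finset.sum_singleton]
  ring

lemma card_filter_pair (n : ℕ) :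
    (({4, 5} : Finset ℕ).filter fun d => d ∣ n).card
      = (if 4 ∣ n then 1 else 0) + (if 5 ∣ n then 1 else 0) := by
  rw [Finset.card_filter]
  rw [show ({4, 5} : Finset ℕ) = insert 4 {5} from rfl]
  rw [Finset.sum_insert (by decide), Finset.sum_singleton]

lemma card_filter_single (n : ℕ) :
    (({5} : Finset ℕ).filter fun d => d ∣ n).card = (if 5 ∣ n then 1 else 0) := by
  rw [Finset.card_filter, Finset.sum_singleton]

lemma two_pow_tExp (i j : ℕ) :
    (2:ℤ) ^ tExp i j
      = (if 4 ∣ i * j then 2 else 1) * (if 5 ∣ i * j then 2 else 1) *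
        (if 2 ∣ i ∧ 11 ∣ i * j then 2 else 1) := by
  unfold tExp
  by_cases hEi : Even i
  · rw [if_pos hEi, card_filter_triple]
    have h2i : 2 ∣ i := hEi.two_dvd
    by_cases h4 : 4 ∣ i * j <;> by_cases h5 : 5 ∣ i * j <;> by_cases h11 : 11 ∣ i * j <;>
      simp [h4, h5, h11, h2i] <;> norm_num
  · rw [if_neg hEi]
    have h2i : ¬ (2 ∣ i) := by
      rw [← even_iff_two_dvd]
      exact hEi
    by_cases hEj : Even j
    · rw [if_pos hEj, card_filter_pair]
      by_cases h4 : 4 ∣ i * j <;> by_cases h5 : 5 ∣ i * j <;>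
        simp [h4, h5, h2i] <;> norm_num
    · rw [if_neg hEj, card_filter_single]
      have hodd : ¬ (2 ∣ i * j) := by
        rw [← even_iff_two_dvd, Nat.even_mul]
        push_neg
        exact ⟨hEi, hEj⟩
      have h4 : ¬ (4 ∣ i * j) := fun hc => hodd (dvd_trans (by norm_num) hc)
      by_cases h5 : 5 ∣ i * j <;> simp [h4, h5, h2i] <;> norm_num

/-- The numerator of the collapsed single series. -/
noncomputable def fullNum (n : ℕ) : ℤ :=
  ∑ d ∈ n.divisors, (2:ℤ) ^ tExp (n / d) d * moebius d * d

lemma fullNum_eq (n : ℕ) :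
    fullNum n = P4 n * P5 n * (HAF n - Q11 n * (HAF n - GAF n)) := by
  rcases eq_or_ne n 0 with rfl | hn
  · simp [fullNum]
  have h1 : fullNum n = ∑ d ∈ n.divisors, (P4 n * P5 n *
      ((moebius d * d * (if 2 ∣ n / d then 2 else 1)) -
        Q11 n * (moebius d * d * (if 2 ∣ n / d then 2 else 1) - moebius d * d))) := by
    refine Finset.sum_congr rfl fun d hd => ?_
    have hdvd := (Nat.mem_divisors.mp hd).1
    have hid : n / d * d = n := Nat.div_mul_cancel hdvd
    have htwo := two_pow_tExp (n / d) d
    rw [hid] at htwo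
    rw [htwo]
    unfold P4 P5 Q11
    by_cases ha : 2 ∣ n / d <;> by_cases hb : 11 ∣ n <;>
      by_cases hc : 4 ∣ n <;> by_cases he : 5 ∣ n <;>
      simp [ha, hb, hc, he] <;> ring
  rw [h1, ← Finset.mul_sum]
  congr 1
  rw [Finset.sum_sub_distrib, ← Finset.mul_sum, Finset.sum_sub_distrib]
  rw [← HAF_apply, ← GAF_apply]

/-- The collapsed single series term. -/
noncomputable def fullF (n : ℕ) : ℝ :=
  (fullNum n : ℝ) / ((n:ℝ) ^ 2 * (Nat.totient n : ℝ))

lemma fullF_eq (n : ℕ) : fullF n = gH n - gH11 n + gG11 n := by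
  unfold fullF gH gH11 gG11
  rw [fullNum_eq]
  push_cast
  ring

/-! ### Summability of the double series -/

lemma tExp_le (i j : ℕ) : tExp i j ≤ 3 := by
  unfold tExp
  split
  · exact le_trans (Finset.card_filter_le _ _) (by decide)
  split
  · exact le_trans (Finset.card_filter_le _ _) (by decide)
  · exact le_trans (Finset.card_filter_le _ _) (by decide)

lemma summable_aux32 : Summable (fun j : ℕ => Real.sqrt 2 / ((j:ℝ) * Real.sqrt j)) := by
  have h := Real.summable_one_div_nat_rpow.mpr (by norm_num : (1:ℝ) < 3/2)
  refine Summable.congr (h.mul_left (Real.sqrt 2)) fun j => ?_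
  rcases eq_or_ne j 0 with rfl | hj
  · rw [Nat.cast_zero, Real.zero_rpow (by norm_num : (3:ℝ)/2 ≠ 0)]
    simp
  · have hjpos : (0:ℝ) < (j:ℝ) := by exact_mod_cast Nat.pos_of_ne_zero hj
    have hrw : ((j:ℝ) ^ ((3:ℝ)/2)) = (j:ℝ) * Real.sqrt j := by
      rw [show (3:ℝ)/2 = 1 + 1/2 by norm_num, Real.rpow_add hjpos, Real.rpow_one,
        Real.sqrt_eq_rpow]
    rw [hrw, mul_one_div]

lemma sqrt_bound (j : ℕ) (hj : j ≠ 0) :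
    1 / ((j:ℝ) * (Nat.totient j : ℝ)) ≤ Real.sqrt 2 / ((j:ℝ) * Real.sqrt j) := by
  have hj1 : (1:ℝ) ≤ (j:ℝ) := by exact_mod_cast Nat.one_le_iff_ne_zero.mpr hj
  have hjpos : (0:ℝ) < (j:ℝ) := by linarith
  have hφpos : (0:ℝ) < (Nat.totient j : ℝ) := by
    exact_mod_cast Nat.totient_pos.mpr (Nat.pos_of_ne_zero hj)
  have hsj : (0:ℝ) < Real.sqrt j := Real.sqrt_pos.mpr hjpos
  have key : Real.sqrt j ≤ Real.sqrt 2 * (Nat.totient j : ℝ) := by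
    have h2 : (j:ℝ) ≤ 2 * (Nat.totient j : ℝ) ^ 2 := by exact_mod_cast le_two_mul_totient_sq j
    calc Real.sqrt j ≤ Real.sqrt (2 * (Nat.totient j : ℝ) ^ 2) := Real.sqrt_le_sqrt h2
      _ = Real.sqrt 2 * (Nat.totient j : ℝ) := by
          rw [Real.sqrt_mul (by norm_num), Real.sqrt_sq (le_of_lt hφpos)]
  rw [div_le_div_iff₀ (mul_pos hjpos hφpos) (mul_pos hjpos hsj)]
  calc 1 * ((j:ℝ) * Real.sqrt j) = (j:ℝ) * Real.sqrt j := by ring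
    _ ≤ (j:ℝ) * (Real.sqrt 2 * (Nat.totient j : ℝ)) :=
        mul_le_mul_of_nonneg_left key (le_of_lt hjpos)
    _ = Real.sqrt 2 * ((j:ℝ) * (Nat.totient j : ℝ)) := by ring

lemma abs_splitTerm_le (ij : ℕ × ℕ) :
    |splitTerm ij| ≤ (8 / ((ij.1:ℝ)) ^ 2) * (Real.sqrt 2 / ((ij.2:ℝ) * Real.sqrt ij.2)) := by
  obtain ⟨i, j⟩ := ij
  by_cases h : 1 ≤ i ∧ 1 ≤ j
  case neg =>
    have h0 : splitTerm (i, j) = 0 := by unfold splitTerm; rw [if_neg h]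
    rw [h0, abs_zero]
    positivity
  case pos =>
    obtain ⟨hi, hj⟩ := h
    have hiR : (1:ℝ) ≤ (i:ℝ) := by exact_mod_cast hi
    have hjR : (1:ℝ) ≤ (j:ℝ) := by exact_mod_cast hj
    have hij : i * j ≠ 0 := by positivity
    have hφ : (0:ℝ) < (Nat.totient (i * j) : ℝ) := by
      exact_mod_cast Nat.totient_pos.mpr (Nat.pos_of_ne_zero hij)
    have hφj : (0:ℝ) < (Nat.totient j : ℝ) := by
      exact_mod_cast Nat.totient_pos.mpr (by omega : 0 < j)
    have hD : (0:ℝ) < (i:ℝ) ^ 2 * (j:ℝ) * (Nat.totient (i * j) : ℝ) := by positivity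
    have hN : |(2:ℝ) ^ tExp i j * (moebius j : ℝ)| ≤ 8 := by
      rw [abs_mul, abs_of_pos (by positivity : (0:ℝ) < (2:ℝ) ^ tExp i j)]
      have h1 : (2:ℝ) ^ tExp i j ≤ (2:ℝ) ^ 3 :=
        pow_le_pow_right₀ (by norm_num) (tExp_le i j)
      have h2 : |(moebius j : ℝ)| ≤ 1 := by
        rw [show |(moebius j : ℝ)| = ((|moebius j| : ℤ) : ℝ) by rw [Int.cast_abs]]
        exact_mod_cast abs_moebius_le_one
      nlinarith [abs_nonneg ((moebius j : ℝ))]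
    calc |splitTerm (i, j)|
        = |(2:ℝ) ^ tExp i j * (moebius j : ℝ)| /
            ((i:ℝ) ^ 2 * (j:ℝ) * (Nat.totient (i * j) : ℝ)) := by
          unfold splitTerm
          rw [if_pos ⟨hi, hj⟩]
          rw [abs_div, abs_of_pos hD]
      _ ≤ 8 / ((i:ℝ) ^ 2 * (j:ℝ) * (Nat.totient (i * j) : ℝ)) := by gcongr
      _ = (8 / (i:ℝ) ^ 2) * (1 / ((j:ℝ) * (Nat.totient (i * j) : ℝ))) := by
          have hi0 : (i:ℝ) ≠ 0 := by linarith
          have hj0 : (j:ℝ) ≠ 0 := by linarith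
          field_simp
      _ ≤ (8 / (i:ℝ) ^ 2) * (Real.sqrt 2 / ((j:ℝ) * Real.sqrt j)) := by
          refine mul_le_mul_of_nonneg_left ?_ (by positivity)
          have hdvd : Nat.totient j ∣ Nat.totient (i * j) :=
            Nat.totient_dvd_of_dvd (dvd_mul_left j i)
          have hle : (Nat.totient j : ℝ) ≤ (Nat.totient (i * j) : ℝ) := by
            exact_mod_cast Nat.le_of_dvd (Nat.totient_pos.mpr (Nat.pos_of_ne_zero hij)) hdvd
          calc 1 / ((j:ℝ) * (Nat.totient (i * j) : ℝ))
              ≤ 1 / ((j:ℝ) * (Nat.totient j : ℝ)) :=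
                one_div_le_one_div_of_le (by positivity)
                  (mul_le_mul_of_nonneg_left hle (by positivity))
            _ ≤ Real.sqrt 2 / ((j:ℝ) * Real.sqrt j) := sqrt_bound j (by omega)

set_option maxHeartbeats 1000000 in
lemma summable_abs_splitTerm : Summable (fun ij : ℕ × ℕ => |splitTerm ij|) := by
  have hM : Summable (fun x : ℕ × ℕ =>
      (8 / ((x.1:ℝ)) ^ 2) * (Real.sqrt 2 / ((x.2:ℝ) * Real.sqrt x.2))) :=
    Summable.mul_of_nonneg (summable_const_div_sq 8) summable_aux32
      (fun i => by positivity) (fun j => by positivity)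
  exact Summable.of_nonneg_of_le (fun _ => abs_nonneg _) abs_splitTerm_le hM

/-! ### Collapsing the double sum -/

noncomputable def F2 : ℕ × ℕ → ℝ := fun nd =>
  if nd.2 ∈ nd.1.divisors then
    (2:ℝ) ^ tExp (nd.1 / nd.2) nd.2 * (moebius nd.2 : ℝ) * (nd.2:ℝ) /
      ((nd.1:ℝ) ^ 2 * (Nat.totient nd.1 : ℝ))
  else 0

lemma splitTerm_support {x : ℕ × ℕ} (h : splitTerm x ≠ 0) : 1 ≤ x.1 ∧ 1 ≤ x.2 := by
  by_contra hc
  exact h (by unfold splitTerm; rw [if_neg hc])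

lemma F2_eq_splitTerm {a b : ℕ} (ha : 1 ≤ a) (hb : 1 ≤ b) :
    F2 (a * b, b) = splitTerm (a, b) := by
  have hab : a * b ≠ 0 := Nat.mul_ne_zero (by omega) (by omega)
  have hmem : b ∈ (a * b).divisors := Nat.mem_divisors.mpr ⟨dvd_mul_left b a, hab⟩
  have hq : a * b / b = a := by
    rw [mul_comm]
    exact Nat.mul_div_cancel_left a (by omega : 0 < b)
  unfold F2 splitTerm
  rw [if_pos hmem, if_pos ⟨ha, hb⟩]
  simp only [hq]
  have hφ : (0:ℝ) < (Nat.totient (a * b) : ℝ) := by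
    exact_mod_cast Nat.totient_pos.mpr (Nat.pos_of_ne_zero hab)
  have haR : (0:ℝ) < (a:ℝ) := by exact_mod_cast ha
  have hbR : (0:ℝ) < (b:ℝ) := by exact_mod_cast hb
  push_cast
  rw [div_eq_div_iff (by positivity) (by positivity)]
  ring

/-- The reindexing map from the support of `splitTerm`. -/
noncomputable def Imap : Function.support splitTerm → ℕ × ℕ :=
  fun x => (x.val.1 * x.val.2, x.val.2)

lemma Imap_inj : Function.Injective Imap := by
  rintro ⟨⟨a₁, b₁⟩, h₁⟩ ⟨⟨a₂, b₂⟩, h₂⟩ h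
  have hb : b₁ = b₂ := congrArg Prod.snd h
  have ha : a₁ * b₁ = a₂ * b₂ := congrArg Prod.fst h
  have hx₁ := splitTerm_support h₁
  subst hb
  have : a₁ = a₂ := Nat.eq_of_mul_eq_mul_right (by omega : 0 < b₁) ha
  subst this
  rfl

lemma F2_support_sub : Function.support F2 ⊆ Set.range Imap := by
  rintro ⟨n, d⟩ hnd
  have hmem : d ∈ n.divisors := by
    by_contra hc
    exact hnd (by unfold F2; rw [if_neg hc])
  obtain ⟨hdvd, hn⟩ := Nat.mem_divisors.mp hmem
  have hd : 1 ≤ d := Nat.pos_of_mem_divisors hmem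
  have hnd1 : 1 ≤ n / d := Nat.div_pos (Nat.le_of_dvd (Nat.pos_of_ne_zero hn) hdvd) hd
  have hcancel : n / d * d = n := Nat.div_mul_cancel hdvd
  have hval : splitTerm (n / d, d) = F2 (n, d) := by
    rw [← F2_eq_splitTerm hnd1 hd, hcancel]
  refine ⟨⟨(n / d, d), ?_⟩, ?_⟩
  · rw [Function.mem_support, hval]
    exact hnd
  · show ((n / d) * d, d) = (n, d)
    rw [hcancel]

lemma F2_comp_Imap (x : Function.support splitTerm) : F2 (Imap x) = splitTerm x := by
  obtain ⟨⟨a, b⟩, hx⟩ := x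
  have h := splitTerm_support hx
  exact F2_eq_splitTerm h.1 h.2

lemma summable_F2 : Summable F2 := by
  have hs : Summable splitTerm := summable_abs_iff.mp summable_abs_splitTerm
  obtain ⟨a, ha⟩ := hs
  exact ⟨a, (hasSum_iff_hasSum_of_ne_zero_bij Imap Imap_inj F2_support_sub F2_comp_Imap).mpr ha⟩

lemma tsum_F2_eq : ∑' nd : ℕ × ℕ, F2 nd = ∑' ij : ℕ × ℕ, splitTerm ij :=
  tsum_eq_tsum_of_ne_zero_bij Imap Imap_inj F2_support_sub F2_comp_Imap

lemma inner_sum (n : ℕ) : ∑' d : ℕ, F2 (n, d) = fullF n := by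
  have h0 : ∀ d ∉ n.divisors, F2 (n, d) = 0 := fun d hd => by unfold F2; rw [if_neg hd]
  rw [tsum_eq_sum h0]
  unfold fullF fullNum
  rw [Int.cast_sum, Finset.sum_div]
  refine Finset.sum_congr rfl fun d hd => ?_
  unfold F2
  rw [if_pos hd]
  push_cast
  ring

lemma tsum_splitTerm_eq : ∑' ij : ℕ × ℕ, splitTerm ij = ∑' n : ℕ, fullF n := by
  rw [← tsum_F2_eq, Summable.tsum_prod summable_F2]
  exact tsum_congr inner_sum

end SplitAux

open SplitAux

/-- The double series
`Σ_{i ≥ 1} Σ_{j ≥ 1} 2^{t_{i,j}} μ(j)/(i²·j·φ(ij))` converges absolutely, and half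
of its sum equals `(712671/1569610) · S`. -/
theorem split_density_value :
    Summable (fun ij : ℕ × ℕ => |splitTerm ij|) ∧
    (1 / 2 : ℝ) * ∑' ij : ℕ × ℕ, splitTerm ij = (712671 / 1569610) * eulerProdS := by
  refine ⟨summable_abs_splitTerm, ?_⟩
  have h1 : Summable gH := summable_norm_gH.of_norm
  have h2 : Summable gH11 := summable_norm_gH11.of_norm
  have h3 : Summable gG11 := summable_norm_gG11.of_norm
  have hfull : ∑' n : ℕ, fullF n
      = ((6/5) * (114/119)) * eulerProdS
        - ((6/5) * ((114/119) * (1330/1319))) * eulerProdS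
        + ((19/20) * ((114/119) * (1330/1319))) * eulerProdS := by
    calc ∑' n : ℕ, fullF n = ∑' n : ℕ, (gH n - gH11 n + gG11 n) := tsum_congr fullF_eq
      _ = (∑' n : ℕ, (gH n - gH11 n)) + ∑' n : ℕ, gG11 n := Summable.tsum_add (h1.sub h2) h3
      _ = ((∑' n : ℕ, gH n) - ∑' n : ℕ, gH11 n) + ∑' n : ℕ, gG11 n := by
          rw [Summable.tsum_sub h1 h2]
      _ = _ := by rw [tsum_gH_eq, tsum_gH11_eq, tsum_gG11_eq]
  rw [tsum_splitTerm_eq, hfull]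
  ring
end

section
/- For every odd prime p with p ≡ ±2 (mod 5) (i.e., p inert in ℚ(√5)), one has the congruence (−ε²)^{(p+1)/2} ≡ (−1)^{(p−1)/2} (mod pO), where ε = (1+√5)/2 and O = ℤ[ε]. -/
open Polynomial
/-- The Lagarias sequence: `x₀ = 3`, `x₁ = 1`, `x_{n+2} = x_{n+1} + x_n`. -/
def lagarias : ℕ → ℤ
  | 0 => 3
  | 1 => 1
  | n + 2 => lagarias (n + 1) + lagarias n

/-- The ring `O = ℤ[ε]` where `ε = (1+√5)/2` is a root of `X² - X - 1`;
this is the ring of integers of `K = ℚ(√5)`. -/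
noncomputable def RingO : Type := AdjoinRoot ((X : ℤ[X]) ^ 2 - X - 1)

noncomputable instance : CommRing RingO := by unfold RingO; infer_instance

/-- The golden ratio `ε = (1+√5)/2` as an element of `O = ℤ[ε]`;
its conjugate is `ε̃ = 1 - ε`. -/
noncomputable def eps : RingO := AdjoinRoot.root ((X : ℤ[X]) ^ 2 - X - 1)

instance fact5 : Fact (Nat.Prime 5) := ⟨by norm_num⟩

noncomputable def gpoly (p : ℕ) : (ZMod p)[X] := X ^ 2 - X - 1

lemma five_not_square (p : ℕ) [Fact p.Prime] (hodd : p ≠ 2)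
    (h5 : p % 5 = 2 ∨ p % 5 = 3) : ¬ IsSquare (5 : ZMod p) := by
  have h1 : legendreSym p 5 = legendreSym 5 p :=
    legendreSym.quadratic_reciprocity_one_mod_four (p := 5) (q := p) (by norm_num) hodd
  have h2 : legendreSym 5 (p : ℤ) = legendreSym 5 (((p % 5 : ℕ) : ℤ)) := by
    rw [legendreSym.mod]
    norm_cast
  have h3 : legendreSym p 5 = -1 := by
    rcases h5 with h | h <;> rw [h1, h2, h] <;> norm_num <;> decide
  have := (legendreSym.eq_neg_one_iff p (a := 5)).mp h3
  simpa using this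

lemma no_root (p : ℕ) [Fact p.Prime] (hodd : p ≠ 2)
    (h5 : p % 5 = 2 ∨ p % 5 = 3) : ∀ a : ZMod p, a ^ 2 - a - 1 ≠ 0 := by
  intro a ha
  apply five_not_square p hodd h5
  refine ⟨2 * a - 1, ?_⟩
  linear_combination (-4 : ZMod p) * ha

lemma gpoly_monic (p : ℕ) [Fact p.Prime] : (gpoly p).Monic := by
  unfold gpoly
  monicity!

lemma gpoly_natDegree (p : ℕ) [Fact p.Prime] : (gpoly p).natDegree = 2 := by
  unfold gpoly
  compute_degree!

lemma gpoly_irred (p : ℕ) [Fact p.Prime] (hodd : p ≠ 2)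
    (h5 : p % 5 = 2 ∨ p % 5 = 3) : Irreducible (gpoly p) := by
  rw [Polynomial.irreducible_iff_roots_eq_zero_of_degree_le_three
    (by rw [gpoly_natDegree]) (by rw [gpoly_natDegree]; norm_num)]
  rw [Multiset.eq_zero_iff_forall_notMem]
  intro a ha
  rw [mem_roots ((gpoly_monic p).ne_zero), IsRoot, gpoly] at ha
  simp only [eval_sub, eval_pow, eval_X, eval_one] at ha
  exact no_root p hodd h5 a ha

lemma key (p : ℕ) [Fact p.Prime] (hodd : p ≠ 2) (h5 : p % 5 = 2 ∨ p % 5 = 3) :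
    (-(AdjoinRoot.root (gpoly p)) ^ 2) ^ ((p + 1) / 2) = (-1) ^ ((p - 1) / 2) := by
  haveI : Fact (Irreducible (gpoly p)) := ⟨gpoly_irred p hodd h5⟩
  set θ := AdjoinRoot.root (gpoly p) with hθdef
  have hpp : p.Prime := Fact.out
  haveI : CharP (AdjoinRoot (gpoly p)) p :=
    charP_of_injective_algebraMap (algebraMap (ZMod p) (AdjoinRoot (gpoly p))).injective p
  have hθ : θ ^ 2 = θ + 1 := by
    have h0 : AdjoinRoot.mk (gpoly p) (X ^ 2 - X - 1 : (ZMod p)[X]) = 0 := by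
      rw [show (X ^ 2 - X - 1 : (ZMod p)[X]) = gpoly p from rfl]
      exact AdjoinRoot.mk_self
    simp only [map_sub, map_pow, AdjoinRoot.mk_X, map_one] at h0
    rw [sub_sub, sub_eq_zero] at h0
    exact h0
  set t := θ ^ p with htdef
  have ht2 : t ^ 2 = t + 1 := by
    rw [htdef, ← pow_mul, mul_comm p 2, pow_mul, hθ, add_pow_char, one_pow]
  have hfac : (t - θ) * (t + θ - 1) = 0 := by linear_combination ht2 - hθ
  have htθ : t = 1 - θ := by
    rcases mul_eq_zero.mp hfac with h | h
    · exfalso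
      have hdvd : gpoly p ∣ (X ^ p - X : (ZMod p)[X]) := by
        rw [← AdjoinRoot.mk_eq_zero, map_sub, map_pow, AdjoinRoot.mk_X]
        exact h
      have hne : (X ^ p - X : (ZMod p)[X]) ≠ 0 :=
        FiniteField.X_pow_card_sub_X_ne_zero _ hpp.one_lt
      have hroots := FiniteField.roots_X_pow_card_sub_X (ZMod p)
      rw [ZMod.card] at hroots
      have hsp : Splits (X ^ p - X : (ZMod p)[X]) := by
        rw [splits_iff_card_roots, hroots,
          FiniteField.X_pow_card_sub_X_natDegree_eq _ hpp.one_lt]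
        simpa using ZMod.card p
      have hgsp := hsp.of_dvd hne hdvd
      obtain ⟨a, ha⟩ := hgsp.exists_eval_eq_zero
        (by rw [degree_eq_natDegree (gpoly_monic p).ne_zero, gpoly_natDegree]; norm_num)
      change eval a (gpoly p) = 0 at ha
      unfold gpoly at ha
      simp only [eval_sub, eval_pow, eval_X, eval_one] at ha
      exact no_root p hodd h5 a ha
    · linear_combination h
  have hθp1 : θ ^ (p + 1) = -1 := by
    rw [pow_succ, ← htdef, htθ]
    linear_combination -hθ
  obtain ⟨k, hk⟩ := hpp.odd_of_ne_two hodd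
  have e1 : (p + 1) / 2 = k + 1 := by omega
  have e2 : (p - 1) / 2 = k := by omega
  rw [e1, e2, neg_pow]
  have e3 : (θ ^ 2) ^ (k + 1) = θ ^ (p + 1) := by rw [← pow_mul]; congr 1; omega
  rw [e3, hθp1, pow_succ]
  ring

set_option synthInstance.maxHeartbeats 1000000 in
set_option maxHeartbeats 1000000 in
/-- For every odd prime `p ≡ ±2 (mod 5)` (i.e. inert in `ℚ(√5)`),
one has `(-ε²)^((p+1)/2) ≡ (-1)^((p-1)/2) (mod pO)`. -/
theorem r_pow_half_p_add_one (p : ℕ) (hp : p.Prime) (hodd : p ≠ 2)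
    (h5 : p % 5 = 2 ∨ p % 5 = 3) :
    Ideal.Quotient.mk (Ideal.span {(p : RingO)}) ((-eps ^ 2) ^ ((p + 1) / 2)) =
      Ideal.Quotient.mk (Ideal.span {(p : RingO)}) ((-1) ^ ((p - 1) / 2)) := by
  haveI : Fact p.Prime := ⟨hp⟩
  set f : ℤ[X] := (X : ℤ[X]) ^ 2 - X - 1 with hf
  set I : Ideal ℤ := Ideal.span {(p : ℤ)} with hI
  have hIm : Ideal.map (AdjoinRoot.of f) I = Ideal.span {(p : RingO)} := by
    rw [hI, Ideal.map_span, Set.image_singleton, map_natCast]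
    rfl
  rw [← hIm]
  have hcomp : ((Int.quotientSpanNatEquivZMod p : ℤ ⧸ I ≃+* ZMod p) : ℤ ⧸ I →+* ZMod p).comp
      (Ideal.Quotient.mk I) = Int.castRingHom (ZMod p) := RingHom.ext_int _ _
  have hmap : Ideal.span {gpoly p} =
      Ideal.map ((Polynomial.mapEquiv (Int.quotientSpanNatEquivZMod p) :
        (ℤ ⧸ I)[X] ≃+* (ZMod p)[X]) : (ℤ ⧸ I)[X] →+* (ZMod p)[X])
        (Ideal.span {f.map (Ideal.Quotient.mk I)}) := by
    have hel : (Polynomial.mapEquiv (Int.quotientSpanNatEquivZMod p))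
        (f.map (Ideal.Quotient.mk I)) = gpoly p := by
      rw [Polynomial.mapEquiv_apply, Polynomial.map_map, hcomp, hf, gpoly]
      simp
    rw [Ideal.map_span, Set.image_singleton]
    simp only [RingHom.coe_coe]
    rw [hel]
  let E' : (RingO ⧸ Ideal.map (AdjoinRoot.of f) I) ≃+* AdjoinRoot (gpoly p) :=
    (AdjoinRoot.quotAdjoinRootEquivQuotPolynomialQuot I f).trans
      (Ideal.quotientEquiv _ (Ideal.span {gpoly p})
        (Polynomial.mapEquiv (Int.quotientSpanNatEquivZMod p)) hmap)
  have heps : E' (Ideal.Quotient.mk (Ideal.map (AdjoinRoot.of f) I) eps) =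
      AdjoinRoot.root (gpoly p) := by
    rw [show eps = AdjoinRoot.mk f X from (AdjoinRoot.mk_X).symm]
    show (Ideal.quotientEquiv _ (Ideal.span {gpoly p})
        (Polynomial.mapEquiv (Int.quotientSpanNatEquivZMod p)) hmap)
      ((AdjoinRoot.quotAdjoinRootEquivQuotPolynomialQuot I f)
        (Ideal.Quotient.mk _ (AdjoinRoot.mk f X))) = _
    rw [AdjoinRoot.quotAdjoinRootEquivQuotPolynomialQuot_mk_of, Ideal.quotientEquiv_mk]
    simp only [Polynomial.map_X, Polynomial.mapEquiv_apply]
    rfl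
  apply E'.injective
  show E' (Ideal.Quotient.mk (Ideal.map (AdjoinRoot.of f) I) ((-eps ^ 2) ^ ((p + 1) / 2))) =
    E' (Ideal.Quotient.mk (Ideal.map (AdjoinRoot.of f) I) ((-1) ^ ((p - 1) / 2)))
  simp only [map_pow, map_neg, map_one]
  have hk := key p hodd h5
  rw [← heps] at hk
  refine Eq.trans ?_ hk
  erw [map_pow, map_neg, map_pow, map_pow, map_neg, map_pow]
end

section
/- For every prime p with p ≡ 1 (mod 4) and p ≡ ±2 (mod 5), the multiplicative order of the class of r = −ε² in (O/pO)^* is odd. -/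
open Polynomial
/-- Auxiliary: in `A = (ZMod p)[X]/(X²-X-1)`, if `5` is a non-residue mod `p`
(expressed via Euler's criterion) and `p` is odd, then `α^(p+1) = -1` where `α`
is the root. Indeed `(2α-1)² = 5`, so `(2α-1)^p = -(2α-1)` by Euler, while the
Frobenius computation gives `(2α-1)^p = 2α^p - 1`; hence `α^p = 1 - α` and
`α^(p+1) = α - α² = -1`. -/
lemma aux_root_pow (p : ℕ) [Fact p.Prime] (hodd : p % 2 = 1)
    (heuler : (5 : ZMod p) ^ (p / 2) = -1) :
    (AdjoinRoot.root ((X : (ZMod p)[X]) ^ 2 - X - 1)) ^ (p + 1) = -1 := by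
  set f : (ZMod p)[X] := X ^ 2 - X - 1 with hf
  set α := AdjoinRoot.root f with hαdef
  have hdeg : f.degree = 2 := by rw [hf]; compute_degree!
  haveI : Nontrivial (AdjoinRoot f) := AdjoinRoot.nontrivial f (by rw [hdeg]; decide)
  haveI : CharP (AdjoinRoot f) p :=
    charP_of_injective_ringHom (AdjoinRoot.of f).injective p
  have h0 : α ^ 2 - α - 1 = 0 := by
    have := AdjoinRoot.eval₂_root f
    simpa [hf] using this
  have hα : α ^ 2 = α + 1 := by linear_combination h0
  have hs2 : (2 * α - 1) ^ 2 = 5 := by linear_combination (4 : AdjoinRoot f) * hα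
  have h5A : ((5 : AdjoinRoot f)) ^ (p / 2) = -1 := by
    rw [show (5 : AdjoinRoot f) = AdjoinRoot.of f (5 : ZMod p) by exact (map_ofNat _ _).symm,
      ← map_pow, heuler, map_neg, map_one]
  have hsp : (2 * α - 1) ^ p = -(2 * α - 1) := by
    have hp21 : p = 2 * (p / 2) + 1 := by omega
    calc (2 * α - 1) ^ p = ((2 * α - 1) ^ 2) ^ (p / 2) * (2 * α - 1) := by
          rw [← pow_mul, ← pow_succ, ← hp21]
      _ = -(2 * α - 1) := by rw [hs2, h5A]; ring
  have h2p : (2 : AdjoinRoot f) ^ p = 2 := by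
    rw [show (2 : AdjoinRoot f) = AdjoinRoot.of f (2 : ZMod p) by exact (map_ofNat _ _).symm,
      ← map_pow, ZMod.pow_card]
  have hfresh : (2 * α - 1) ^ p = 2 * α ^ p - 1 := by
    have h1 : (2 * α + (-1)) ^ p = (2 * α) ^ p + (-1) ^ p := add_pow_char _ _ _
    have h2 : ((-1 : AdjoinRoot f)) ^ p = -1 := Odd.neg_one_pow (Nat.odd_iff.mpr hodd)
    calc (2 * α - 1) ^ p = (2 * α + (-1)) ^ p := by ring_nf
      _ = (2 : AdjoinRoot f) ^ p * α ^ p + (-1) ^ p := by rw [h1, mul_pow]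
      _ = 2 * α ^ p - 1 := by rw [h2p, h2]; ring
  have h2u : IsUnit (2 : AdjoinRoot f) := by
    have h2z : (2 : ZMod p) ≠ 0 := by
      intro h
      have hd : (p : ℕ) ∣ 2 := (ZMod.natCast_eq_zero_iff 2 p).mp (by exact_mod_cast h)
      have := Nat.le_of_dvd (by norm_num) hd
      have := (Fact.out : p.Prime).two_le
      omega
    rw [show (2 : AdjoinRoot f) = AdjoinRoot.of f (2 : ZMod p) by exact (map_ofNat _ _).symm]
    exact (h2z.isUnit).map _
  have hαp : α ^ p = 1 - α := by
    have h2 : (2 : AdjoinRoot f) * (α ^ p) = 2 * (1 - α) := by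
      linear_combination hsp - hfresh
    exact h2u.mul_left_cancel h2
  calc α ^ (p + 1) = α ^ p * α := by rw [pow_succ]
    _ = -1 := by rw [hαp]; linear_combination -hα

/-- For every prime `p ≡ 1 (mod 4)` with `p ≡ ±2 (mod 5)`
(i.e. inert in `ℚ(√5)`), the multiplicative order of the class of `r = -ε²`
in `(O/pO)^*` is odd. -/
theorem orderOf_r_odd (p : ℕ) (hp : p.Prime) (h4 : p % 4 = 1)
    (h5 : p % 5 = 2 ∨ p % 5 = 3) :
    Odd (orderOf (Ideal.Quotient.mk (Ideal.span {(p : RingO)}) (-eps ^ 2))) := by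
  haveI : Fact p.Prime := ⟨hp⟩
  haveI : Fact (Nat.Prime 5) := ⟨by norm_num⟩
  have hodd : p % 2 = 1 := by omega
  -- 5 is a non-residue mod p, by quadratic reciprocity
  have h5ns : ¬ IsSquare (5 : ZMod p) := by
    intro hsq
    have h1 : IsSquare ((5 : ℕ) : ZMod p) := by exact_mod_cast hsq
    have h2 : IsSquare ((p : ℕ) : ZMod 5) :=
      (ZMod.exists_sq_eq_prime_iff_of_mod_four_eq_one (q := 5) h4 (by norm_num)).mp h1
    rw [← ZMod.natCast_mod] at h2
    rcases h5 with h | h <;> rw [h] at h2 <;> revert h2 <;> decide +revert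
  have h5ne : (5 : ZMod p) ≠ 0 := by
    intro h
    have hd : (p : ℕ) ∣ 5 := (ZMod.natCast_eq_zero_iff 5 p).mp (by exact_mod_cast h)
    have := (Nat.prime_dvd_prime_iff_eq hp (by norm_num)).mp hd
    omega
  have heuler : (5 : ZMod p) ^ (p / 2) = -1 := by
    rcases ZMod.pow_div_two_eq_neg_one_or_one p h5ne with h | h
    · exact absurd ((ZMod.euler_criterion p h5ne).mpr h) h5ns
    · exact h
  -- the root α of X² - X - 1 over ZMod p
  set f : (ZMod p)[X] := X ^ 2 - X - 1 with hf
  set α := AdjoinRoot.root f with hαdef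
  have hroot : α ^ (p + 1) = -1 := aux_root_pow p hodd heuler
  have hdeg : f.degree = 2 := by rw [hf]; compute_degree!
  haveI : Nontrivial (AdjoinRoot f) := AdjoinRoot.nontrivial f (by rw [hdeg]; decide)
  haveI hAchar : CharP (AdjoinRoot f) p :=
    charP_of_injective_ringHom (AdjoinRoot.of f).injective p
  have h0 : α ^ 2 - α - 1 = 0 := by
    have := AdjoinRoot.eval₂_root f
    simpa [hf] using this
  -- the equation satisfied by eps in RingO
  have heps : eps ^ 2 - eps - 1 = 0 := by
    have := AdjoinRoot.eval₂_root ((X : ℤ[X]) ^ 2 - X - 1)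
    simp at this; exact this
  -- the map φ : RingO → AdjoinRoot f
  have hφc : Polynomial.eval₂ (Int.castRingHom (AdjoinRoot f)) α ((X : ℤ[X]) ^ 2 - X - 1) = 0 := by
    simpa using h0
  let φ : RingO →+* AdjoinRoot f := AdjoinRoot.lift (Int.castRingHom (AdjoinRoot f)) α hφc
  -- the quotient ring Q = O/pO
  have hpQ : ((p : ℕ) : RingO ⧸ Ideal.span {(p : RingO)}) = 0 := by
    rw [← map_natCast (Ideal.Quotient.mk (Ideal.span {(p : RingO)}))]
    exact Ideal.Quotient.eq_zero_iff_mem.mpr (Ideal.mem_span_singleton_self _)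
  haveI : CharP (RingO ⧸ Ideal.span {(p : RingO)}) p := by
    constructor
    intro n
    constructor
    · intro hn
      have hmem : ((n : ℕ) : RingO) ∈ Ideal.span {(p : RingO)} := by
        rw [← Ideal.Quotient.eq_zero_iff_mem, map_natCast]
        exact hn
      obtain ⟨c, hc⟩ := Ideal.mem_span_singleton'.mp hmem
      have hA : ((n : ℕ) : AdjoinRoot f) = 0 := by
        have := congrArg φ hc
        rw [map_mul, map_natCast, map_natCast] at this
        rw [← this, CharP.cast_eq_zero, mul_zero]
      exact (CharP.cast_eq_zero_iff (AdjoinRoot f) p n).mp hA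
    · intro hn
      obtain ⟨k, rfl⟩ := hn
      push_cast
      rw [hpQ, zero_mul]
  -- the map ψ : AdjoinRoot f → Q with ψ α = mk eps
  set Q := RingO ⧸ Ideal.span {(p : RingO)} with hQ
  set e : Q := Ideal.Quotient.mk (Ideal.span {(p : RingO)}) eps with he
  have hεQ : e ^ 2 - e - 1 = 0 := by
    rw [he, ← map_one (Ideal.Quotient.mk (Ideal.span {(p : RingO)})), ← map_pow, ← map_sub,
      ← map_sub, heps, map_zero]
  have hψc : Polynomial.eval₂ (ZMod.castHom (dvd_refl p) Q) e f = 0 := by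
    rw [hf]
    simpa using hεQ
  set ψ : AdjoinRoot f →+* Q := AdjoinRoot.lift (ZMod.castHom (dvd_refl p) Q) e hψc with hψ
  have hψα : ψ α = e := AdjoinRoot.lift_root hψc
  -- the key identity
  set m : ℕ := (p + 1) / 2 with hm
  have hm2 : 2 * m = p + 1 := by omega
  have hmodd : m % 2 = 1 := by omega
  have hkeyA : (-α ^ 2) ^ m = 1 := by
    rw [neg_pow, ← pow_mul, hm2, hroot,
      Odd.neg_one_pow (Nat.odd_iff.mpr hmodd)]
    ring
  have hkey : (-e ^ 2) ^ m = 1 := by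
    have := congrArg ψ hkeyA
    rw [map_pow, map_neg, map_pow, hψα, map_one] at this
    exact this
  have hgoal : Ideal.Quotient.mk (Ideal.span {(p : RingO)}) (-eps ^ 2) = -e ^ 2 := by
    rw [he, map_neg, map_pow]
  rw [hgoal]
  have hdvd : orderOf (-e ^ 2) ∣ m := orderOf_dvd_of_pow_eq_one hkey
  rw [Nat.odd_iff]
  rcases Nat.even_or_odd (orderOf (-e ^ 2)) with hev | hod
  · exfalso
    have : 2 ∣ m := dvd_trans hev.two_dvd hdvd
    omega
  · exact Nat.odd_iff.mp hod
end

section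
/- For every prime p with p ≡ 1 (mod 4) and p ≡ ±2 (mod 5), the multiplicative order of the class of q = (1−3ε)/(1−3ε̃) in (O/pO)^* is odd if and only if −11 is a square modulo p. -/
open Polynomial
lemma aux_sq2 : ¬ IsSquare (2 : ZMod 5) := by decide
lemma aux_sq3 : ¬ IsSquare (3 : ZMod 5) := by decide

lemma eps_sq : eps ^ 2 = eps + 1 := by
  have h : AdjoinRoot.mk ((X:ℤ[X])^2 - X - 1) ((X:ℤ[X])^2 - X - 1) = 0 :=
    AdjoinRoot.mk_self
  rw [map_sub, map_sub, map_pow, AdjoinRoot.mk_X, map_one] at h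
  have h2 : (AdjoinRoot.root ((X:ℤ[X])^2 - X - 1)) ^ 2
      = AdjoinRoot.root ((X:ℤ[X])^2 - X - 1) + 1 := by linear_combination h
  exact h2

lemma quot_nontrivial (p : ℕ) (hp : p.Prime) :
    Nontrivial (RingO ⧸ Ideal.span {(p : RingO)}) := by
  haveI : Fact p.Prime := ⟨hp⟩
  have hmono : ((X:ℤ[X])^2 - X - 1).Monic := by monicity!
  set f : ℤ[X] := (X:ℤ[X])^2 - X - 1 with hf
  have hIJ : (Ideal.span {(p:ℤ)}).map (AdjoinRoot.of f) = Ideal.span {(p : AdjoinRoot f)} := by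
    rw [Ideal.map_span, Set.image_singleton, map_natCast]
  haveI hZn : Nontrivial (ℤ ⧸ Ideal.span {(p:ℤ)}) :=
    (Int.quotientSpanNatEquivZMod p).toEquiv.nontrivial
  have hfbar : (f.map (Ideal.Quotient.mk (Ideal.span {(p:ℤ)}))).Monic := hmono.map _
  have hdeg : (f.map (Ideal.Quotient.mk (Ideal.span {(p:ℤ)}))).natDegree = 2 := by
    rw [hmono.natDegree_map]
    rw [hf]; compute_degree!
  have hne : ¬ IsUnit (f.map (Ideal.Quotient.mk (Ideal.span {(p:ℤ)}))) := by
    intro h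
    rw [hfbar.isUnit_iff] at h
    rw [h] at hdeg
    simp at hdeg
  haveI hNT : Nontrivial ((ℤ ⧸ Ideal.span {(p:ℤ)})[X] ⧸
      Ideal.span {f.map (Ideal.Quotient.mk (Ideal.span {(p:ℤ)}))}) :=
    Ideal.Quotient.nontrivial_iff.mpr (by rwa [Ne, Ideal.span_singleton_eq_top])
  haveI : Nontrivial (AdjoinRoot f ⧸ (Ideal.span {(p:ℤ)}).map (AdjoinRoot.of f)) :=
    (AdjoinRoot.quotAdjoinRootEquivQuotPolynomialQuot (Ideal.span {(p:ℤ)}) f).toEquiv.nontrivial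
  rw [hIJ] at this
  exact this

lemma five_pow_eq_neg_one (p : ℕ) (hp : p.Prime) (h4 : p % 4 = 1)
    (h5 : p % 5 = 2 ∨ p % 5 = 3) : (5 : ZMod p) ^ (p / 2) = -1 := by
  haveI : Fact p.Prime := ⟨hp⟩
  haveI : Fact (Nat.Prime 5) := ⟨by norm_num⟩
  have hns : ¬ IsSquare ((5:ℕ) : ZMod p) := by
    have hiff := ZMod.exists_sq_eq_prime_iff_of_mod_four_eq_one (p := p) (q := 5) h4
      (by norm_num)
    rw [hiff]
    have h2 : ((p:ℕ) : ZMod 5) = ((p % 5 : ℕ) : ZMod 5) := (ZMod.natCast_mod p 5).symm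
    rw [h2]
    rcases h5 with h | h
    · rw [h, show ((2:ℕ) : ZMod 5) = (2 : ZMod 5) by norm_num]
      exact aux_sq2
    · rw [h, show ((3:ℕ) : ZMod 5) = (3 : ZMod 5) by norm_num]
      exact aux_sq3
  have hleg : legendreSym p 5 = -1 := (legendreSym.eq_neg_one_iff' (p := p)).mpr hns
  have h := legendreSym.eq_pow p 5
  rw [hleg] at h
  push_cast at h
  rw [← h]

set_option maxHeartbeats 2000000 in
/-- For every prime `p ≡ 1 (mod 4)` with `p ≡ ±2 (mod 5)`, the
multiplicative order of the class of `q = (1-3ε)/(1-3ε̃)` in `(O/pO)^*` is odd if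
and only if `-11` is a square modulo `p`. (The class of `q` is the unique element
`y` of `O/pO` with `y · (1-3ε̃) = 1-3ε`; here `ε̃ = 1 - ε`.) -/
theorem orderOf_q_odd_iff (p : ℕ) (hp : p.Prime) (h4 : p % 4 = 1)
    (h5 : p % 5 = 2 ∨ p % 5 = 3)
    (y : RingO ⧸ Ideal.span {(p : RingO)})
    (hy : y * Ideal.Quotient.mk (Ideal.span {(p : RingO)}) (1 - 3 * (1 - eps)) =
      Ideal.Quotient.mk (Ideal.span {(p : RingO)}) (1 - 3 * eps)) :
    Odd (orderOf y) ↔ IsSquare (-11 : ZMod p) := by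
  haveI instp : Fact p.Prime := ⟨hp⟩
  have hp2 : p % 2 = 1 := by omega
  obtain ⟨k, hk⟩ : ∃ k, p = 4 * k + 1 := ⟨p / 4, by omega⟩
  haveI hNT : Nontrivial (RingO ⧸ Ideal.span {(p : RingO)}) := quot_nontrivial p hp
  -- the ring hom from `ZMod p`
  have hker : ∀ a ∈ Ideal.span {(p:ℤ)},
      (Int.castRingHom (RingO ⧸ Ideal.span {(p : RingO)})) a = 0 := by
    intro a ha
    rw [Ideal.mem_span_singleton] at ha
    obtain ⟨c, rfl⟩ := ha
    have hpR : ((p:ℕ) : RingO ⧸ Ideal.span {(p : RingO)}) = 0 := by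
      rw [show ((p:ℕ) : RingO ⧸ Ideal.span {(p : RingO)})
          = Ideal.Quotient.mk _ ((p:ℕ) : RingO) by rfl]
      rw [Ideal.Quotient.eq_zero_iff_mem]
      exact Ideal.mem_span_singleton_self _
    rw [map_mul, map_natCast, hpR, zero_mul]
  let φ : ZMod p →+* RingO ⧸ Ideal.span {(p : RingO)} :=
    (Ideal.Quotient.lift (Ideal.span {(p:ℤ)}) (Int.castRingHom _) hker).comp
      (Int.quotientSpanNatEquivZMod p).symm.toRingHom
  have hφ : Function.Injective φ := φ.injective
  haveI : CharP (RingO ⧸ Ideal.span {(p:RingO)}) p := charP_of_injective_ringHom hφ p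
  -- transfer of scalar facts
  have h5R : (5 : RingO ⧸ Ideal.span {(p:RingO)}) ^ (p / 2) = -1 := by
    have h := congrArg φ (five_pow_eq_neg_one p hp h4 h5)
    rwa [map_pow, map_ofNat, map_neg, map_one] at h
  have h2p : (2 : RingO ⧸ Ideal.span {(p:RingO)}) ^ p = 2 := by
    have h := congrArg φ (ZMod.pow_card (2 : ZMod p))
    rwa [map_pow, map_ofNat] at h
  have h3p : (3 : RingO ⧸ Ideal.span {(p:RingO)}) ^ p = 3 := by
    have h := congrArg φ (ZMod.pow_card (3 : ZMod p))
    rwa [map_pow, map_ofNat] at h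
  have h2ne : (2 : ZMod p) ≠ 0 := by
    rw [show (2 : ZMod p) = ((2:ℕ) : ZMod p) by norm_num, Ne,
      ZMod.natCast_eq_zero_iff]
    intro h
    have := Nat.le_of_dvd (by norm_num) h
    interval_cases p <;> omega
  have h11ne : (-11 : ZMod p) ≠ 0 := by
    rw [neg_ne_zero, show (11 : ZMod p) = ((11:ℕ) : ZMod p) by norm_num, Ne,
      ZMod.natCast_eq_zero_iff]
    intro h
    have hp11 : p = 11 := (Nat.prime_dvd_prime_iff_eq hp (by norm_num)).mp h
    omega
  have hu2 : IsUnit (2 : RingO ⧸ Ideal.span {(p:RingO)}) := by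
    have := (h2ne.isUnit).map φ
    rwa [map_ofNat] at this
  have hu11 : IsUnit (-11 : RingO ⧸ Ideal.span {(p:RingO)}) := by
    have := (h11ne.isUnit).map φ
    rwa [map_neg, map_ofNat] at this
  -- the quadratic relation in the quotient
  set e : RingO ⧸ Ideal.span {(p:RingO)} := Ideal.Quotient.mk _ eps with hedef
  have he : e ^ 2 = e + 1 := by
    rw [hedef, ← map_pow, eps_sq, map_add, map_one]
  -- Frobenius computations
  have hs : (2*e - 1) ^ 2 = 5 := by linear_combination (4 : RingO ⧸ Ideal.span {(p:RingO)}) * he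
  have hsp : (2*e - 1) ^ p = -(2*e - 1) := by
    calc (2*e - 1) ^ p = ((2*e-1)^2) ^ (p/2) * (2*e-1) := by
          rw [← pow_mul, ← pow_succ]
          congr 1
          omega
    _ = (5 : RingO ⧸ Ideal.span {(p:RingO)}) ^ (p/2) * (2*e-1) := by rw [hs]
    _ = -(2*e-1) := by rw [h5R]; ring
  have hep : (2:RingO ⧸ Ideal.span {(p:RingO)}) * e ^ p = 2 * (1 - e) := by
    have h1 : (2:RingO ⧸ Ideal.span {(p:RingO)}) * e ^ p = (2*e)^p := by
      rw [mul_pow, h2p]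
    have h2 : ((1:RingO ⧸ Ideal.span {(p:RingO)}) + (2*e-1))^p = 1 + (2*e-1)^p := by
      rw [add_pow_char, one_pow]
    rw [h1, show (2:RingO ⧸ Ideal.span {(p:RingO)})*e = 1 + (2*e-1) by ring, h2, hsp]
    ring
  have hepow : e ^ p = 1 - e := hu2.mul_left_cancel hep
  have hoddp : Odd p := Nat.odd_iff.mpr hp2
  have hpip : (1 - 3*e) ^ p = 1 - 3*(1-e) := by
    calc (1 - 3*e)^p = (1 + (-(3*e)))^p := by ring_nf
    _ = 1 + (-(3*e))^p := by rw [add_pow_char, one_pow]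
    _ = 1 - (3*e)^p := by rw [hoddp.neg_pow]; ring
    _ = 1 - 3^p * e^p := by rw [mul_pow]
    _ = 1 - 3*(1-e) := by rw [h3p, hepow]
  -- the basic multiplicative relations
  have hab : (1 - 3*e) * (1 - 3*(1-e)) = -11 := by
    linear_combination (-9 : RingO ⧸ Ideal.span {(p:RingO)}) * he
  have hy' : y * (1 - 3*(1-e)) = 1 - 3*e := by
    have hbm : Ideal.Quotient.mk (Ideal.span {(p : RingO)}) (1 - 3*(1-eps))
        = 1 - 3*(1-e) := by
      rw [map_sub, map_one, map_mul, map_sub, map_one, map_ofNat, hedef]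
    have ham : Ideal.Quotient.mk (Ideal.span {(p : RingO)}) (1 - 3*eps) = 1 - 3*e := by
      rw [map_sub, map_one, map_mul, map_ofNat, hedef]
    rw [hbm, ham] at hy
    exact hy
  have hyc : y * (-11) = (1 - 3*e)^2 := by
    have h := congrArg (fun t => t * (1 - 3*e)) hy'
    calc y * (-11) = y * ((1 - 3*e) * (1 - 3*(1-e))) := by rw [hab]
    _ = (y * (1 - 3*(1-e))) * (1 - 3*e) := by ring
    _ = (1 - 3*e) * (1 - 3*e) := by rw [hy']
    _ = (1 - 3*e)^2 := by ring
  set m : ℕ := p / 2 + 1 with hmdef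
  have hm2 : 2 * m = p + 1 := by omega
  have hmodd : Odd m := ⟨k, by omega⟩
  -- the key identity
  have hkey : y ^ m * (-11 : RingO ⧸ Ideal.span {(p:RingO)}) ^ (p/2) = 1 := by
    have h1 : (y * (-11))^m = ((1 - 3*e)^2)^m := by rw [hyc]
    have h2 : ((1 - 3*e)^2)^m = (1 - 3*e)^p * (1 - 3*e) := by
      rw [← pow_mul, show 2 * m = p + 1 from hm2, pow_succ]
    have h3 : (1 - 3*e)^p * (1 - 3*e) = -11 := by
      rw [hpip]
      linear_combination (-9 : RingO ⧸ Ideal.span {(p:RingO)}) * he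
    have h4 : (y * (-11))^m = y^m * ((-11 : RingO ⧸ Ideal.span {(p:RingO)})^(p/2) * (-11)) := by
      rw [hmdef]
      ring
    have h5' : (y^m * (-11 : RingO ⧸ Ideal.span {(p:RingO)})^(p/2)) * (-11) = 1 * (-11) := by
      rw [one_mul]
      calc (y^m * (-11 : RingO ⧸ Ideal.span {(p:RingO)})^(p/2)) * (-11)
          = y^m * ((-11 : RingO ⧸ Ideal.span {(p:RingO)})^(p/2) * (-11)) := by ring
      _ = (y * (-11))^m := h4.symm
      _ = (1 - 3*e)^p * (1 - 3*e) := by rw [h1, h2]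
      _ = -11 := h3
    exact hu11.mul_right_cancel h5'
  have hcard : (-11 : RingO ⧸ Ideal.span {(p:RingO)}) ^ (p-1) = 1 := by
    have h := congrArg φ (ZMod.pow_card_sub_one_eq_one h11ne)
    rwa [map_pow, map_neg, map_ofNat, map_one] at h
  have hy2m : y ^ (2*m) = 1 := by
    have h : (y^m * (-11 : RingO ⧸ Ideal.span {(p:RingO)})^(p/2))^2 = 1 := by
      rw [hkey, one_pow]
    rw [mul_pow, ← pow_mul, ← pow_mul] at h
    rw [show p/2 * 2 = p - 1 by omega, hcard, mul_one] at h
    rw [show 2*m = m*2 by ring]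
    exact h
  have hiff1 : y^m = 1 ↔ (-11 : RingO ⧸ Ideal.span {(p:RingO)})^(p/2) = 1 := by
    constructor
    · intro h; rwa [h, one_mul] at hkey
    · intro h; rwa [h, mul_one] at hkey
  have hiff2 : (-11 : RingO ⧸ Ideal.span {(p:RingO)})^(p/2) = 1
      ↔ IsSquare (-11 : ZMod p) := by
    have hmap : φ ((-11 : ZMod p)^(p/2)) = (-11 : RingO ⧸ Ideal.span {(p:RingO)})^(p/2) := by
      rw [map_pow, map_neg, map_ofNat]
    constructor
    · intro h
      rw [ZMod.euler_criterion p h11ne]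
      apply hφ
      rw [hmap, h, map_one]
    · intro h
      rw [ZMod.euler_criterion p h11ne] at h
      rw [← hmap, h, map_one]
  constructor
  · intro hodd
    have hdvd : orderOf y ∣ 2*m := orderOf_dvd_of_pow_eq_one hy2m
    have hco : Nat.Coprime (orderOf y) 2 := hodd.coprime_two_right
    have hdm : orderOf y ∣ m := hco.dvd_of_dvd_mul_left hdvd
    exact hiff2.mp (hiff1.mp (orderOf_dvd_iff_pow_eq_one.mp hdm))
  · intro hsq
    have hym : y^m = 1 := hiff1.mpr (hiff2.mpr hsq)
    have hdvd : orderOf y ∣ m := orderOf_dvd_of_pow_eq_one hym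
    exact hmodd.of_dvd_nat hdvd
end
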